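/- arXiv:2604.07109 — 4 statements merged into one kernel-verified Lean document; each statement's English description precedes it below -/
import Mathlib

section
/- There exists a real orthogonal n × n matrix in which every square minor (determinant of any square submatrix obtained by choosing equally many rows and columns) is nonzero. -/
open Matrix

namespace MinorsAux

variable {n : ℕ}




/-- The involution swapping `A` and `B` via `e`. -/
def sigmaf (A B : Finset (Fin n)) (e : ↥A ≃ ↥B) (i : Fin n) : Fin n :=
  if h : i ∈ A then (e ⟨i, h⟩ : Fin n) else if h : i ∈ B then (e.symm ⟨i, h⟩ : Fin n) else i


lemma sigmaf_of_mem_A {i : Fin n} (h : i ∈ A) : sigmaf A B e i = (e ⟨i, h⟩ : Fin n) :=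
  dif_pos h

lemma sigmaf_of_mem_B (hAB : Disjoint A B) {i : Fin n} (h : i ∈ B) :
    sigmaf A B e i = (e.symm ⟨i, h⟩ : Fin n) := by
  have hA : i ∉ A := fun hA => (Finset.disjoint_left.mp hAB hA) h
  rw [sigmaf, dif_neg hA, dif_pos h]

lemma sigmaf_of_not_mem {i : Fin n} (h1 : i ∉ A) (h2 : i ∉ B) : sigmaf A B e i = i := by
  rw [sigmaf, dif_neg h1, dif_neg h2]

lemma sigmaf_mem_B {i : Fin n} (h : i ∈ A) : sigmaf A B e i ∈ B := by
  rw [sigmaf_of_mem_A h]; exact (e ⟨i, h⟩).2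

lemma sigmaf_mem_A (hAB : Disjoint A B) {i : Fin n} (h : i ∈ B) : sigmaf A B e (i) ∈ A := by
  rw [sigmaf_of_mem_B hAB h]; exact (e.symm ⟨i, h⟩).2

lemma sigmaf_invol (hAB : Disjoint A B) (i : Fin n) : sigmaf A B e (sigmaf A B e i) = i := by
  by_cases hA : i ∈ A
  · have h1 : sigmaf A B e i ∈ B := sigmaf_mem_B hA
    rw [sigmaf_of_mem_B hAB h1]
    have : (⟨sigmaf A B e i, h1⟩ : ↥B) = e ⟨i, hA⟩ := Subtype.ext (sigmaf_of_mem_A hA)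
    rw [this, Equiv.symm_apply_apply]
  · by_cases hB : i ∈ B
    · have h1 : sigmaf A B e i ∈ A := sigmaf_mem_A hAB hB
      rw [sigmaf_of_mem_A h1]
      have : (⟨sigmaf A B e i, h1⟩ : ↥A) = e.symm ⟨i, hB⟩ := Subtype.ext (sigmaf_of_mem_B hAB hB)
      rw [this, Equiv.apply_symm_apply]
    · rw [sigmaf_of_not_mem hA hB, sigmaf_of_not_mem hA hB]

lemma sigmaf_inj (hAB : Disjoint A B) : Function.Injective (sigmaf A B e) :=
  Function.Involutive.injective (sigmaf_invol hAB)

/-- The skew matrix. -/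
def Xmat (A B : Finset (Fin n)) (e : ↥A ≃ ↥B) : Matrix (Fin n) (Fin n) ℝ :=
  Matrix.of fun i j =>
    (if i ∈ A ∧ j = sigmaf A B e i then (1:ℝ) else 0) -
    (if j ∈ A ∧ i = sigmaf A B e j then (1:ℝ) else 0)

/-- The signed permutation matrix. -/
def M0 (A B : Finset (Fin n)) (e : ↥A ≃ ↥B) : Matrix (Fin n) (Fin n) ℝ :=
  Matrix.of fun i j => if i = sigmaf A B e j then (if j ∈ B then (-1:ℝ) else 1) else 0

lemma Xmat_transpose : (Xmat A B e)ᵀ = - Xmat A B e := by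
  ext i j
  simp only [Xmat, transpose_apply, Matrix.of_apply, Matrix.neg_apply, neg_sub]

lemma key (hAB : Disjoint A B) : (1 + Xmat A B e) * M0 A B e = 1 - Xmat A B e := by
  ext i j
  rw [Matrix.mul_apply]
  have hsum : ∀ l, (1 + Xmat A B e) i l * M0 A B e l j =
      if l = sigmaf A B e j then (1 + Xmat A B e) i l * (if j ∈ B then (-1:ℝ) else 1) else 0 := by
    intro l
    simp only [M0, Matrix.of_apply]
    split_ifs <;> ring
  simp only [hsum, Finset.sum_ite_eq', Finset.mem_univ, if_true]
  set s := sigmaf A B e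
  have hinv := sigmaf_invol (A := A) (B := B) (e := e) hAB
  have hinj := sigmaf_inj (A := A) (B := B) (e := e) hAB
  simp only [Matrix.add_apply, Matrix.sub_apply, Matrix.one_apply, Xmat, Matrix.of_apply]
  by_cases hjA : j ∈ A
  · have hjB : j ∉ B := fun h => (Finset.disjoint_left.mp hAB hjA) h
    have hsjB : s j ∈ B := sigmaf_mem_B hjA
    have hsjA : s j ∉ A := fun h => (Finset.disjoint_left.mp hAB h) hsjB
    have hjs : j ≠ s j := fun h => hjB (h ▸ hsjB)
    simp only [if_neg hjB]
    -- X i (s j) = [i∈A ∧ s j = s i] - [s j ∈ A ∧ i = s (s j)]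
    -- = [i = j ∧ i ∈ A] - 0
    have e1 : (if i ∈ A ∧ s j = s i then (1:ℝ) else 0) = if i = j then 1 else 0 := by
      by_cases h : i = j
      · subst h; simp [hjA]
      · have : ¬ (i ∈ A ∧ s j = s i) := by
          rintro ⟨_, h2⟩; exact h (hinj h2).symm
        simp [h, this]
    have e2 : (if s j ∈ A ∧ i = s (s j) then (1:ℝ) else 0) = 0 := by simp [hsjA]
    have e3 : (if i ∈ A ∧ j = s i then (1:ℝ) else 0) = 0 := by
      by_cases h : i ∈ A ∧ j = s i
      · exact absurd (h.2 ▸ sigmaf_mem_B h.1) hjB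
      · simp [h]
    have e4 : (if j ∈ A ∧ i = s j then (1:ℝ) else 0) = if i = s j then 1 else 0 := by
      simp [hjA]
    rw [e1, e2, e3, e4]
    split_ifs <;> ring
  · by_cases hjB : j ∈ B
    · have hsjA : s j ∈ A := sigmaf_mem_A hAB hjB
      have hsjB : s j ∉ B := fun h => (Finset.disjoint_left.mp hAB hsjA) h
      have hjs : j ≠ s j := fun h => hsjB (h ▸ hjB)
      simp only [if_pos hjB]
      -- LHS factor : ([i = s j] + X i (s j)) * (-1)
      have e1 : (if i ∈ A ∧ s j = s i then (1:ℝ) else 0) = 0 := by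
        by_cases h : i ∈ A ∧ s j = s i
        · exfalso
          have : i = j := hinj h.2.symm
          exact (Finset.disjoint_left.mp hAB h.1) (this ▸ hjB)
        · simp [h]
      have e2 : (if s j ∈ A ∧ i = s (s j) then (1:ℝ) else 0) = if i = j then 1 else 0 := by
        rw [show s (s j) = j from hinv j]; simp [hsjA]
      have e3 : (if i ∈ A ∧ j = s i then (1:ℝ) else 0) = if i = s j then 1 else 0 := by
        by_cases h : i = s j
        · subst h; rw [if_pos ⟨hsjA, (hinv j).symm⟩, if_pos rfl]
        · have : ¬ (i ∈ A ∧ j = s i) := by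
            rintro ⟨_, h2⟩
            apply h
            rw [h2]
            exact (hinv i).symm
          simp [h, this]
      have e4 : (if j ∈ A ∧ i = s j then (1:ℝ) else 0) = 0 := by simp [hjA]
      rw [e1, e2, e3, e4]
      split_ifs <;> ring
    · have hsj : s j = j := sigmaf_of_not_mem hjA hjB
      simp only [if_neg hjB, hsj]
      have e3 : (if i ∈ A ∧ j = s i then (1:ℝ) else 0) = 0 := by
        by_cases h : i ∈ A ∧ j = s i
        · exact absurd (h.2 ▸ sigmaf_mem_B h.1) hjB
        · simp [h]
      have e4 : (if j ∈ A ∧ i = s j then (1:ℝ) else 0) = 0 := by simp [hjA]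
      rw [e3, e4]
      ring


lemma det_one_add_skew_ne_zero {X : Matrix (Fin n) (Fin n) ℝ} (hX : Xᵀ = -X) :
    (1 + X).det ≠ 0 := by
  intro h
  obtain ⟨v, hv, hmv⟩ := (Matrix.exists_mulVec_eq_zero_iff).mpr h
  have h2 : v ⬝ᵥ (X *ᵥ v) = 0 := by
    have h3 : v ⬝ᵥ (X *ᵥ v) = (Xᵀ *ᵥ v) ⬝ᵥ v := by
      rw [Matrix.dotProduct_mulVec, ← Matrix.mulVec_transpose]
    rw [hX] at h3
    have h4 : ((-X) *ᵥ v) ⬝ᵥ v = -(v ⬝ᵥ (X *ᵥ v)) := by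
      rw [Matrix.neg_mulVec, neg_dotProduct, dotProduct_comm]
    rw [h4] at h3
    linarith
  have h1 : v ⬝ᵥ v = 0 := by
    have := congrArg (fun w => v ⬝ᵥ w) hmv
    simp only [Matrix.add_mulVec, Matrix.one_mulVec, dotProduct_add, h2,
      dotProduct_zero] at this
    linarith
  exact hv (dotProduct_self_eq_zero.mp h1)


abbrev EE (n : ℕ) := Fin n → Fin n → ℝ

noncomputable def Sm (x : EE n) : Matrix (Fin n) (Fin n) ℝ := Matrix.of x - (Matrix.of x)ᵀ

lemma Sm_skew (x : EE n) : (Sm x)ᵀ = - Sm x := by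
  ext i j; simp [Sm]

noncomputable def Gm (x : EE n) : Matrix (Fin n) (Fin n) ℝ :=
  (1 + Sm x).adjugate * (1 - Sm x)

lemma ana_coord (i j : Fin n) : AnalyticOnNhd ℝ (fun x : EE n => x i j) Set.univ :=
  ((ContinuousLinearMap.proj (R := ℝ) (φ := fun _ : Fin n => ℝ) j).comp
    (ContinuousLinearMap.proj (R := ℝ) (φ := fun _ : Fin n => Fin n → ℝ) i)).analyticOnNhd
      Set.univ

lemma ana_det {m : ℕ} {f : EE n → Matrix (Fin m) (Fin m) ℝ}
    (hf : ∀ i j, AnalyticOnNhd ℝ (fun x => f x i j) Set.univ) :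
    AnalyticOnNhd ℝ (fun x => (f x).det) Set.univ := by
  have hrw : (fun x => (f x).det) = fun x =>
      ∑ σ : Equiv.Perm (Fin m), (((Equiv.Perm.sign σ : ℤ) : ℝ) * ∏ i, f x (σ i) i) := by
    funext x
    rw [Matrix.det_apply]
    congr 1
    funext σ
    rw [Units.smul_def, zsmul_eq_mul]
  rw [hrw]
  apply Finset.analyticOnNhd_fun_sum
  intro σ _
  exact analyticOnNhd_const.mul (Finset.analyticOnNhd_fun_prod Finset.univ (fun i _ => hf (σ i) i))

lemma ana_one_add (i j : Fin n) :
    AnalyticOnNhd ℝ (fun x : EE n => (1 + Sm x) i j) Set.univ := by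
  have hrw : (fun x : EE n => (1 + Sm x) i j)
      = fun x => ((1 : Matrix (Fin n) (Fin n) ℝ) i j) + (x i j - x j i) := by
    funext x; simp [Sm]
  rw [hrw]
  exact analyticOnNhd_const.add ((ana_coord i j).sub (ana_coord j i))

lemma ana_one_sub (i j : Fin n) :
    AnalyticOnNhd ℝ (fun x : EE n => (1 - Sm x) i j) Set.univ := by
  have hrw : (fun x : EE n => (1 - Sm x) i j)
      = fun x => ((1 : Matrix (Fin n) (Fin n) ℝ) i j) - (x i j - x j i) := by
    funext x; simp [Sm]
  rw [hrw]
  exact analyticOnNhd_const.sub ((ana_coord i j).sub (ana_coord j i))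

lemma ana_adj (i j : Fin n) :
    AnalyticOnNhd ℝ (fun x : EE n => (1 + Sm x).adjugate i j) Set.univ := by
  have hrw : (fun x : EE n => (1 + Sm x).adjugate i j)
      = fun x => ((1 + Sm x).updateRow j (Pi.single i 1)).det := by
    funext x; rw [Matrix.adjugate_apply]
  rw [hrw]
  apply ana_det
  intro a b
  by_cases h : a = j
  · subst h
    have : (fun x : EE n => ((1 + Sm x).updateRow a (Pi.single i 1)) a b)
        = fun _ => (Pi.single i (1:ℝ) : Fin n → ℝ) b := by
      funext x; simp [Matrix.updateRow_apply]
    rw [this]; exact analyticOnNhd_const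
  · have : (fun x : EE n => ((1 + Sm x).updateRow j (Pi.single i 1)) a b)
        = fun x => (1 + Sm x) a b := by
      funext x; simp [Matrix.updateRow_apply, h]
    rw [this]; exact ana_one_add a b

lemma ana_Gm (i j : Fin n) :
    AnalyticOnNhd ℝ (fun x : EE n => Gm x i j) Set.univ := by
  have hrw : (fun x : EE n => Gm x i j)
      = fun x => ∑ l, (1 + Sm x).adjugate i l * (1 - Sm x) l j := by
    funext x; rw [Gm, Matrix.mul_apply]
  rw [hrw]
  exact Finset.analyticOnNhd_fun_sum Finset.univ (fun l _ => (ana_adj i l).mul (ana_one_sub l j))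

lemma ana_minor {k : ℕ} (r c : Fin k → Fin n) :
    AnalyticOnNhd ℝ (fun x : EE n => ((Gm x).submatrix r c).det) Set.univ :=
  ana_det (fun i j => ana_Gm (r i) (c j))

lemma dense_ne_zero {f : EE n → ℝ} (hf : AnalyticOnNhd ℝ f Set.univ)
    {x₀ : EE n} (hx₀ : f x₀ ≠ 0) : Dense {x | f x ≠ 0} := by
  by_contra h
  rw [dense_iff_inter_open] at h
  push_neg at h
  obtain ⟨V, hVopen, hVne, hV⟩ := h
  obtain ⟨z, hz⟩ := hVne
  have hVz : ∀ y ∈ V, f y = 0 := by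
    intro y hy
    by_contra hy'
    exact (Set.not_nonempty_iff_eq_empty.mpr hV).elim ⟨y, hy, hy'⟩
  have hev : f =ᶠ[nhds z] 0 := Filter.eventuallyEq_of_mem (hVopen.mem_nhds hz) hVz
  have := hf.eqOn_zero_of_preconnected_of_eventuallyEq_zero isPreconnected_univ
    (Set.mem_univ z) hev
  exact hx₀ (this (Set.mem_univ x₀))


lemma witness {k : ℕ} (r c : Fin k → Fin n) (hr : Function.Injective r)
    (hc : Function.Injective c) :
    ∃ X : Matrix (Fin n) (Fin n) ℝ, Xᵀ = -X ∧
      ((((1 + X).adjugate * (1 - X)).submatrix r c).det ≠ 0) := by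
  classical
  set R : Finset (Fin n) := Finset.image r Finset.univ with hR
  set C : Finset (Fin n) := Finset.image c Finset.univ with hC
  have hRcard : R.card = k := by
    rw [hR, Finset.card_image_of_injective _ hr, Finset.card_univ, Fintype.card_fin]
  have hCcard : C.card = k := by
    rw [hC, Finset.card_image_of_injective _ hc, Finset.card_univ, Fintype.card_fin]
  set A : Finset (Fin n) := R \ C with hA
  set B : Finset (Fin n) := C \ R with hB
  have hABcard : A.card = B.card := by
    have h1 : A.card + (R ∩ C).card = R.card := Finset.card_sdiff_add_card_inter R C
    have h2 : B.card + (C ∩ R).card = C.card := Finset.card_sdiff_add_card_inter C R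
    have h3 : (R ∩ C).card = (C ∩ R).card := by rw [Finset.inter_comm]
    omega
  have hcards : Fintype.card ↥A = Fintype.card ↥B := by
    simp only [Fintype.card_coe]; exact hABcard
  set e : ↥A ≃ ↥B := Fintype.equivOfCardEq hcards with he
  have hAB : Disjoint A B := by
    have h1 : Disjoint A C := by
      rw [hA]; exact Finset.sdiff_disjoint
    exact h1.mono_right (by rw [hB]; exact Finset.sdiff_subset)
  refine ⟨Xmat A B e, Xmat_transpose, ?_⟩
  set X := Xmat A B e with hX
  have hdet : (1 + X).det ≠ 0 := det_one_add_skew_ne_zero Xmat_transpose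
  have hG : (1 + X).adjugate * (1 - X) = (1 + X).det • M0 A B e := by
    rw [← key hAB, ← mul_assoc, Matrix.adjugate_mul, Matrix.smul_mul, one_mul]
  rw [hG]
  -- build the permutation π
  have hmemR : ∀ j : Fin k, sigmaf A B e (c j) ∈ R := by
    intro j
    have hcj : c j ∈ C := by rw [hC]; exact Finset.mem_image_of_mem c (Finset.mem_univ j)
    by_cases h : c j ∈ R
    · have hnA : c j ∉ A := by rw [hA]; simp [hcj]
      have hnB : c j ∉ B := by rw [hB]; simp [h]
      rw [sigmaf_of_not_mem hnA hnB]; exact h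
    · have hBm : c j ∈ B := by rw [hB]; simp [hcj, h]
      have := sigmaf_mem_A (e := e) hAB hBm
      exact (Finset.mem_sdiff.mp this).1
  have hex : ∀ j : Fin k, ∃ i : Fin k, r i = sigmaf A B e (c j) := by
    intro j
    obtain ⟨i, _, hi⟩ := Finset.mem_image.mp (hmemR j)
    exact ⟨i, hi⟩
  choose π hπ using hex
  have hπinj : Function.Injective π := by
    intro a b hab
    have : sigmaf A B e (c a) = sigmaf A B e (c b) := by rw [← hπ a, ← hπ b, hab]
    exact hc (sigmaf_inj hAB this)
  have hπbij : Function.Bijective π := (Finite.injective_iff_bijective).mp hπinj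
  set πe : Equiv.Perm (Fin k) := Equiv.ofBijective π hπbij with hπe
  set d : Fin k → ℝ := fun j => if c j ∈ B then (-1:ℝ) else 1 with hd
  have hsub : (M0 A B e).submatrix r c = (Matrix.diagonal d).submatrix πe.symm id := by
    ext i j
    simp only [Matrix.submatrix_apply, M0, Matrix.of_apply, Matrix.diagonal_apply, id]
    by_cases h : r i = sigmaf A B e (c j)
    · have : πe.symm i = j := by
        apply πe.injective
        rw [Equiv.apply_symm_apply]
        apply hr
        rw [h, ← hπ j]
        rfl
      rw [if_pos h, if_pos this, this]
    · have : πe.symm i ≠ j := by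
        intro hq
        apply h
        rw [← hq] at h ⊢
        rw [← hπ (πe.symm i)]
        have : πe (πe.symm i) = i := Equiv.apply_symm_apply _ _
        rw [show π (πe.symm i) = i from this]
      rw [if_neg h, if_neg this]
  have hdia : ((Matrix.diagonal d).submatrix πe.symm id).det ≠ 0 := by
    rw [Matrix.det_permute, Matrix.det_diagonal]
    apply mul_ne_zero
    · have h5 : ((Equiv.Perm.sign πe.symm : ℤ) : ℝ) ≠ 0 :=
        Int.cast_ne_zero.mpr (Units.ne_zero _)
      exact_mod_cast h5
    · apply Finset.prod_ne_zero_iff.mpr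
      intro j _
      show (if c j ∈ B then (-1:ℝ) else 1) ≠ 0
      split_ifs <;> norm_num
  have hsm : ((1 + X).det • M0 A B e).submatrix r c
      = (1 + X).det • ((M0 A B e).submatrix r c) := rfl
  rw [hsm, Matrix.det_smul, hsub]
  exact mul_ne_zero (pow_ne_zero _ hdet) hdia



lemma isOpen_ne_zero {f : EE n → ℝ} (hf : AnalyticOnNhd ℝ f Set.univ) :
    IsOpen {x | f x ≠ 0} := by
  rw [isOpen_iff_mem_nhds]
  intro x hx
  exact (hf x (Set.mem_univ x)).continuousAt.eventually_ne hx

lemma orth (x : EE n) :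
    ((1 + Sm x).det⁻¹ • Gm x) * ((1 + Sm x).det⁻¹ • Gm x)ᵀ = 1 := by
  set X := Sm x with hXdef
  have hX : Xᵀ = -X := Sm_skew x
  have hdet : (1 + X).det ≠ 0 := det_one_add_skew_ne_zero hX
  have htr : (1 + X)ᵀ = 1 - X := by rw [transpose_add, transpose_one, hX, sub_eq_add_neg]
  have hdet' : (1 - X).det ≠ 0 := by
    rw [← htr, Matrix.det_transpose]; exact hdet
  have hM : (1 + X).det⁻¹ • Gm x = (1 + X)⁻¹ * (1 - X) := by
    rw [Gm, Matrix.inv_def, Ring.inverse_eq_inv, ← Matrix.smul_mul, ← hXdef]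
  rw [hM]
  have hMt : ((1 + X)⁻¹ * (1 - X))ᵀ = (1 + X) * (1 - X)⁻¹ := by
    rw [Matrix.transpose_mul, Matrix.transpose_nonsing_inv, htr]
    congr 1
    · rw [transpose_sub, transpose_one, hX, sub_neg_eq_add]
  rw [hMt]
  have hcomm : (1 - X) * (1 + X) = (1 + X) * (1 - X) := by noncomm_ring
  calc (1 + X)⁻¹ * (1 - X) * ((1 + X) * (1 - X)⁻¹)
      = (1 + X)⁻¹ * ((1 - X) * (1 + X)) * (1 - X)⁻¹ := by
        rw [mul_assoc, mul_assoc, mul_assoc]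
    _ = (1 + X)⁻¹ * ((1 + X) * (1 - X)) * (1 - X)⁻¹ := by rw [hcomm]
    _ = ((1 + X)⁻¹ * (1 + X)) * ((1 - X) * (1 - X)⁻¹) := by
        rw [mul_assoc, mul_assoc, mul_assoc]
    _ = 1 := by
        rw [Matrix.nonsing_inv_mul _ (isUnit_iff_ne_zero.mpr hdet),
          Matrix.mul_nonsing_inv _ (isUnit_iff_ne_zero.mpr hdet'), one_mul]


end MinorsAux

/-- There exists a real orthogonal n × n matrix in which every square minor is nonzero. -/
theorem exists_orthogonal_matrix_all_minors_ne_zero (n : ℕ) (hn : 1 ≤ n) :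
    ∃ M : Matrix (Fin n) (Fin n) ℝ, M * M.transpose = 1 ∧
      ∀ (k : ℕ) (r c : Fin k → Fin n), StrictMono r → StrictMono c →
        (M.submatrix r c).det ≠ 0 := by
  classical
  open MinorsAux in
  let I := Σ k : Fin (n+1), (Fin (k : ℕ) → Fin n) × (Fin (k : ℕ) → Fin n)
  let U : I → Set (EE n) := fun p =>
    if StrictMono p.2.1 ∧ StrictMono p.2.2 then
      {x | ((Gm x).submatrix p.2.1 p.2.2).det ≠ 0} else Set.univ
  have ho : ∀ p, IsOpen (U p) := by
    intro p
    by_cases h : StrictMono p.2.1 ∧ StrictMono p.2.2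
    · simp only [U, if_pos h]
      exact isOpen_ne_zero (ana_minor p.2.1 p.2.2)
    · simp only [U, if_neg h]
      exact isOpen_univ
  have hd : ∀ p, Dense (U p) := by
    intro p
    by_cases h : StrictMono p.2.1 ∧ StrictMono p.2.2
    · simp only [U, if_pos h]
      obtain ⟨X, hXskew, hXw⟩ := witness p.2.1 p.2.2 h.1.injective h.2.injective
      set x₀ : EE n := fun a b => X a b / 2 with hx₀
      have hSm : Sm x₀ = X := by
        ext i j
        have : X j i = -X i j := by
          have := congrFun (congrFun hXskew i) j
          simpa [Matrix.transpose_apply] using this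
        simp [Sm, hx₀, this]
        ring
      apply dense_ne_zero (ana_minor p.2.1 p.2.2)
      show ((Gm x₀).submatrix p.2.1 p.2.2).det ≠ 0
      rw [Gm, hSm]
      exact hXw
    · simp only [U, if_neg h]
      exact dense_univ
  have hdense : Dense (⋂ p, U p) := dense_iInter_of_isOpen ho hd
  obtain ⟨x, hx⟩ := hdense.nonempty
  refine ⟨(1 + Sm x).det⁻¹ • Gm x, orth x, ?_⟩
  intro k r c hr hc
  have hk : k ≤ n := by
    have := Fintype.card_le_of_injective r hr.injective
    simpa using this
  have hxp := Set.mem_iInter.mp hx ⟨⟨k, Nat.lt_succ_of_le hk⟩, (r, c)⟩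
  rw [show U ⟨⟨k, Nat.lt_succ_of_le hk⟩, (r, c)⟩ =
      {y : EE n | ((Gm y).submatrix r c).det ≠ 0} from if_pos ⟨hr, hc⟩] at hxp
  have hminor : ((Gm x).submatrix r c).det ≠ 0 := hxp
  have hdet : (1 + Sm x).det ≠ 0 := det_one_add_skew_ne_zero (Sm_skew x)
  have hsm : (((1 + Sm x).det⁻¹ • Gm x).submatrix r c)
      = (1 + Sm x).det⁻¹ • ((Gm x).submatrix r c) := rfl
  rw [hsm, Matrix.det_smul]
  exact mul_ne_zero (pow_ne_zero _ (inv_ne_zero hdet)) hminor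
end

section
/- For every finite-dimensional real inner product space V with orthonormal basis {e_v : v ∈ N}, there exists an orthonormal basis {f_v : v ∈ N} such that the pair is generic: for all subsets S, T ⊆ N of equal size, ⟨f_S, e_T⟩ ≠ 0, where f_S and e_T denote wedge products over the sets in increasing order. -/
open Finset

variable {N : Type*} [Fintype N] [LinearOrder N]

/-- inv(S,T) = number of pairs (s,t) ∈ S × T with s > t. -/
def invCount (S T : Finset N) : ℕ := ((S ×ˢ T).filter fun p => p.2 < p.1).card

/-- sgn(S,T) = (-1)^inv(S,T). -/
def esign (S T : Finset N) : ℝ := (-1 : ℝ) ^ invCount S T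

/-- The basis vector e_S of the exterior algebra, modelled as `Finset N → ℝ`. -/
def eb (S : Finset N) : Finset N → ℝ := fun T => if T = S then 1 else 0

/-- The bilinear exterior product, defined on basis vectors by
`e_S ∧ e_T = sgn(S,T) e_{S∪T}` if `S ∩ T = ∅`, and `0` otherwise. -/
def wedge (f g : Finset N → ℝ) : Finset N → ℝ :=
  fun U => ∑ S ∈ U.powerset, esign S (U \ S) * f S * g (U \ S)

/-- Inner product on the exterior algebra making `{e_S}` orthonormal. -/
def ip (f g : Finset N → ℝ) : ℝ := ∑ S : Finset N, f S * g S

/-- A vector of V (coordinates `a`) viewed inside the exterior algebra. -/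
def vec (a : N → ℝ) : Finset N → ℝ := fun T => ∑ i : N, if T = {i} then a i else 0

/-- Inner product on V in coordinates. -/
def ipV (a b : N → ℝ) : ℝ := ∑ i : N, a i * b i

/-- Wedge product of a list of elements of the exterior algebra (e_∅ is the unit). -/
def wedgeList (l : List (Finset N → ℝ)) : Finset N → ℝ := l.foldr wedge (eb ∅)

/-- Ordered wedge product f_S = f_{s₁} ∧ ⋯ ∧ f_{s_k} for S = {s₁ < ⋯ < s_k},
for a family of vectors of V given in coordinates. -/
def wedgeFam (f : N → N → ℝ) (S : Finset N) : Finset N → ℝ :=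
  wedgeList ((S.sort (· ≤ ·)).map (fun v => vec (f v)))

/-- A family of vectors of V (in coordinates) is orthonormal. -/
def Orthonormalish (f : N → N → ℝ) : Prop :=
  ∀ u v : N, ipV (f u) (f v) = if u = v then 1 else 0

/-- The bilinear left interior product, defined on basis vectors by
`e_T ⌞ e_S = sgn(S∖T, T)·e_{S∖T}` if `T ⊆ S` and `0` otherwise. -/
def lint (g f : Finset N → ℝ) : Finset N → ℝ :=
  fun U => ∑ T : Finset N, if Disjoint T U then esign U T * g T * f (U ∪ T) else 0

/-!
`⟨f_S, e_T⟩` is a determinant: the interior product by a vector is the adjoint of wedging with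
it and an antiderivation, so peeling `f_{s₁}` off `f_S` is the Laplace expansion of
`det (⟨f_s, e_t⟩)_{s ∈ S, t ∈ T}` along its first row. Writing `f = R e`, it remains to find an
orthogonal `R` all of whose square minors are nonzero. Take the Cayley transform
`R = (1 - A)(1 + A)⁻¹` of a real skew matrix `A` (for which `det (1 + A) ≠ 0`): up to a power of
`det (1 + A)`, each minor of `R` is a polynomial in the entries of `A`. None of these polynomials
is zero: for the minor on `S × T`, evaluate at a skew `A` turning `S \ T` onto `T \ S` by right
angles, whose Cayley transform is orthogonal and maps the rows of `S` into the span of `T`. A point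
avoiding the zero sets of the finitely many polynomials gives `R`.
-/

open scoped Matrix

section

variable {α : Type*} [LinearOrder α]

lemma invCount_singleton_left (i : α) (W : Finset α) :
    invCount {i} W = (W.filter (· < i)).card := by
  rw [invCount, singleton_product, filter_map, card_map]
  rfl

lemma esign_mul_self (S T : Finset α) : esign S T * esign S T = 1 := by
  rw [esign, ← pow_add, ← two_mul, pow_mul]
  norm_num

lemma esign_singleton_insert {i j : α} {W : Finset α} (hj : j ∉ W) :
    esign {i} (insert j W) = (if j < i then -1 else 1) * esign {i} W := by
  rw [esign, esign, invCount_singleton_left, invCount_singleton_left, filter_insert]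
  split_ifs with hji
  · rw [card_insert_of_notMem fun h => hj (mem_filter.mp h).1, pow_succ, mul_comm]
  · rw [one_mul]

lemma esign_singleton_insert_swap {i j : α} {W : Finset α} (hi : i ∉ W) (hj : j ∉ W)
    (hij : i ≠ j) :
    esign {i} (insert j W) * esign {j} (insert i W) = -(esign {i} W * esign {j} W) := by
  rw [esign_singleton_insert hj, esign_singleton_insert hi]
  rcases hij.lt_or_gt with h | h
  · simp [h, h.not_gt]
  · simp [h, h.not_gt]

lemma wedge_sum_smul_right {ι : Type*} (f : Finset α → ℝ) (s : Finset ι) (c : ι → ℝ)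
    (g : ι → Finset α → ℝ) :
    wedge f (∑ j ∈ s, c j • g j) = ∑ j ∈ s, c j • wedge f (g j) := by
  ext U
  simp only [wedge, Finset.sum_apply, Pi.smul_apply, smul_eq_mul, mul_sum]
  rw [sum_comm]
  exact sum_congr rfl fun _ _ => sum_congr rfl fun _ _ => by ring

lemma wedge_zero_right (f : Finset α → ℝ) : wedge f 0 = 0 := by
  ext U
  simp [wedge]

end

lemma wedge_vec_apply (a : N → ℝ) (g : Finset N → ℝ) (U : Finset N) :
    wedge (vec a) g U = ∑ i ∈ U, esign {i} (U.erase i) * a i * g (U.erase i) := by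
  simp only [wedge, vec, mul_sum, sum_mul, mul_ite, ite_mul, mul_zero, zero_mul]
  rw [sum_comm]
  simp [sum_ite_eq', erase_eq]

/-- `lint (vec a)` with the sign `esign {i} U` in place of `esign U {i}`, which makes it the exact
adjoint of `wedge (vec a)` (`ip_wedge_vec`). -/
def contract (a : N → ℝ) (y : Finset N → ℝ) : Finset N → ℝ :=
  fun U => ∑ i ∈ Uᶜ, esign {i} U * a i * y (insert i U)

lemma ip_wedge_vec (a : N → ℝ) (x y : Finset N → ℝ) :
    ip (wedge (vec a) x) y = ip x (contract a y) := by
  simp only [ip, contract, wedge_vec_apply, sum_mul, mul_sum]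
  rw [sum_sigma', sum_sigma']
  refine sum_nbij' (fun p => ⟨p.1.erase p.2, p.2⟩) (fun p => ⟨insert p.2 p.1, p.2⟩)
    ?_ ?_ ?_ ?_ ?_ <;> simp only [mem_sigma, mem_univ, mem_compl, true_and]
  · exact fun p _ => notMem_erase _ _
  · exact fun p _ => mem_insert_self _ _
  · exact fun p hp => Sigma.ext (insert_erase hp) HEq.rfl
  · exact fun p hp => Sigma.ext (erase_insert hp) HEq.rfl
  · intro p hp
    rw [insert_erase hp]
    ring

lemma contract_eb_empty (a : N → ℝ) : contract a (eb ∅) = 0 := by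
  ext U
  simp [contract, eb]

lemma contract_wedge_vec (a b : N → ℝ) (y : Finset N → ℝ) :
    contract a (wedge (vec b) y) = ipV a b • y - wedge (vec b) (contract a y) := by
  ext U
  have lhs : contract a (wedge (vec b) y) U
      = ∑ i ∈ Uᶜ, a i * b i * y U + ∑ i ∈ Uᶜ, ∑ j ∈ U, esign {i} U * a i
          * (esign {j} (insert i (U.erase j)) * b j * y (insert i (U.erase j))) := by
    rw [contract, ← sum_add_distrib]
    refine sum_congr rfl fun i hi => ?_
    have hiU : i ∉ U := mem_compl.mp hi
    rw [wedge_vec_apply, sum_insert hiU, erase_insert hiU, mul_add, mul_sum]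
    congr 1
    · linear_combination a i * b i * y U * esign_mul_self {i} U
    · refine sum_congr rfl fun j hj => ?_
      rw [erase_insert_of_ne (ne_of_mem_of_not_mem hj hiU).symm]
  have rhs : wedge (vec b) (contract a y) U
      = ∑ j ∈ U, a j * b j * y U + ∑ j ∈ U, ∑ i ∈ Uᶜ, esign {j} (U.erase j) * b j
          * (esign {i} (U.erase j) * a i * y (insert i (U.erase j))) := by
    rw [wedge_vec_apply, ← sum_add_distrib]
    refine sum_congr rfl fun j hj => ?_
    rw [contract, compl_erase, sum_insert (by simp [hj]), insert_erase hj, mul_add, mul_sum]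
    congr 1
    linear_combination a j * b j * y U * esign_mul_self {j} (U.erase j)
  have cross : ∀ i ∈ Uᶜ, ∀ j ∈ U, esign {i} U * a i
      * (esign {j} (insert i (U.erase j)) * b j * y (insert i (U.erase j)))
      = -(esign {j} (U.erase j) * b j
          * (esign {i} (U.erase j) * a i * y (insert i (U.erase j)))) := by
    intro i hi j hj
    have hiU : i ∉ U := mem_compl.mp hi
    have key := esign_singleton_insert_swap (fun h => hiU (mem_of_mem_erase h))
      (notMem_erase j U) (ne_of_mem_of_not_mem hj hiU).symm
    rw [insert_erase hj] at key
    linear_combination a i * b j * y (insert i (U.erase j)) * key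
  have diag : ipV a b = ∑ i ∈ Uᶜ, a i * b i + ∑ j ∈ U, a j * b j := by
    rw [add_comm, sum_add_sum_compl]
    rfl
  rw [Pi.sub_apply, Pi.smul_apply, smul_eq_mul, lhs, rhs, diag,
    sum_congr rfl fun i hi => sum_congr rfl (cross i hi), sum_comm]
  simp only [sum_neg_distrib, add_mul, sum_mul]
  ring

lemma wedgeList_ofFn_succ {n : ℕ} (b : Fin (n + 1) → N → ℝ) :
    wedgeList (List.ofFn fun i => vec (b i))
      = wedge (vec (b 0)) (wedgeList (List.ofFn fun i : Fin n => vec (b i.succ))) := by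
  rw [List.ofFn_succ]
  rfl

lemma contract_wedgeList_ofFn (a : N → ℝ) {n : ℕ} (b : Fin (n + 1) → N → ℝ) :
    contract a (wedgeList (List.ofFn fun i => vec (b i)))
      = ∑ j : Fin (n + 1), ((-1) ^ (j : ℕ) * ipV a (b j)) •
          wedgeList (List.ofFn fun i => vec (b (j.succAbove i))) := by
  induction n with
  | zero =>
    rw [wedgeList_ofFn_succ, contract_wedge_vec, Fin.sum_univ_one]
    simp [wedgeList, contract_eb_empty, wedge_zero_right]
  | succ n ih =>
    rw [wedgeList_ofFn_succ, contract_wedge_vec, ih, wedge_sum_smul_right,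
      Fin.sum_univ_succ (n := n + 1)]
    simp only [Fin.succAbove_zero, Fin.val_zero, pow_zero, one_mul, Fin.val_succ, pow_succ,
      wedgeList_ofFn_succ (fun i => b (Fin.succAbove (Fin.succ _) i)), Fin.succ_succAbove_zero,
      Fin.succ_succAbove_succ, mul_neg_one, neg_mul, neg_smul, sum_neg_distrib, sub_eq_add_neg]

lemma ip_wedgeList_ofFn {n : ℕ} (a b : Fin n → N → ℝ) :
    ip (wedgeList (List.ofFn fun i => vec (a i))) (wedgeList (List.ofFn fun i => vec (b i)))
      = (Matrix.of fun i j => ipV (a i) (b j)).det := by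
  induction n with
  | zero => simp [ip, wedgeList, eb]
  | succ n ih =>
    rw [wedgeList_ofFn_succ a, ip_wedge_vec, contract_wedgeList_ofFn, Matrix.det_succ_row_zero]
    change dotProduct _ (∑ j, _) = _
    simp only [dotProduct_sum, dotProduct_smul, smul_eq_mul]
    exact sum_congr rfl fun j _ => congrArg _ (ih _ _)

lemma wedgeFam_eq_wedgeList_ofFn (f : N → N → ℝ) (S : Finset N) {k : ℕ} (h : S.card = k) :
    wedgeFam f S = wedgeList (List.ofFn fun i : Fin k => vec (f (S.orderEmbOfFin h i))) := by
  subst h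
  refine congrArg wedgeList (List.ext_getElem (by simp) fun m _ _ => ?_)
  simp [orderEmbOfFin_apply]

section

variable {α : Type*} [LinearOrder α]

def orderedMinor {R : Type*} [CommRing R] (M : Matrix α α R) (S T : Finset α)
    (h : S.card = T.card) : R :=
  (M.submatrix (S.orderEmbOfFin rfl) (T.orderEmbOfFin h.symm)).det

lemma orderedMinor_smul {R : Type*} [CommRing R] (c : R) (M : Matrix α α R) {S T : Finset α}
    (h : S.card = T.card) : orderedMinor (c • M) S T h = c ^ S.card * orderedMinor M S T h := by
  have := Matrix.det_smul ((M.submatrix (S.orderEmbOfFin rfl) (T.orderEmbOfFin h.symm))) c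
  rwa [Fintype.card_fin] at this

end

lemma ip_wedgeFam (f g : N → N → ℝ) {S T : Finset N} (h : S.card = T.card) :
    ip (wedgeFam f S) (wedgeFam g T) = orderedMinor (Matrix.of f * (Matrix.of g)ᵀ) S T h := by
  rw [wedgeFam_eq_wedgeList_ofFn f S rfl, wedgeFam_eq_wedgeList_ofFn g T h.symm,
    ip_wedgeList_ofFn]
  rfl

lemma orthonormalish_iff_mul_transpose (f : N → N → ℝ) :
    Orthonormalish f ↔ Matrix.of f * (Matrix.of f)ᵀ = 1 := by
  rw [← Matrix.ext_iff]
  simp [Orthonormalish, ipV, Matrix.mul_apply, Matrix.one_apply]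

lemma det_submatrix_ne_zero_of_mul_transpose_eq_one {n R : Type*} [Fintype n] [DecidableEq n]
    [CommRing R] [Nontrivial R] {Q : Matrix n n R} (hQ : Q * Qᵀ = 1) {k : ℕ} {u v : Fin k → n}
    (hu : Function.Injective u) (hv : Function.Injective v)
    (hsupp : ∀ i, ∀ t ∉ Set.range v, Q (u i) t = 0) :
    (Q.submatrix u v).det ≠ 0 := by
  refine Matrix.det_ne_zero_of_right_inverse (B := (Q.submatrix u v)ᵀ) ?_
  ext i i'
  rw [← Matrix.submatrix_one u hu, Matrix.submatrix_apply, ← hQ, Matrix.mul_apply,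
    Matrix.mul_apply]
  exact Fintype.sum_of_injective v hv _ _ (fun t ht => by simp [hsupp i t ht]) fun j => rfl

lemma orderedMinor_ne_zero_of_mul_transpose_eq_one {R : Type*} [CommRing R] [Nontrivial R]
    {Q : Matrix N N R} (hQ : Q * Qᵀ = 1)
    {S T : Finset N} (h : S.card = T.card) (hsupp : ∀ s ∈ S, ∀ t ∉ T, Q s t = 0) :
    orderedMinor Q S T h ≠ 0 :=
  det_submatrix_ne_zero_of_mul_transpose_eq_one hQ (S.orderEmbOfFin _).injective
    (T.orderEmbOfFin _).injective fun i t ht =>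
      hsupp _ (mem_coe.mp ((S.range_orderEmbOfFin rfl).subset (Set.mem_range_self i))) t
        (by rwa [range_orderEmbOfFin] at ht)

lemma RingHom.map_orderedMinor {R R' : Type*} [CommRing R] [CommRing R'] (f : R →+* R')
    (M : Matrix N N R) {S T : Finset N} (h : S.card = T.card) :
    f (orderedMinor M S T h) = orderedMinor (f.mapMatrix M) S T h := by
  rw [orderedMinor, RingHom.map_det]
  rfl

section Cayley

variable {n R : Type*} [Fintype n] [DecidableEq n] [CommRing R]

/-- The Cayley transform `(1 - A)(1 + A)⁻¹`, scaled by `det (1 + A)` so that it is polynomial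
in the entries of `A`. -/
def cayleyAdj (A : Matrix n n R) : Matrix n n R := (1 - A) * (1 + A).adjugate

lemma RingHom.mapMatrix_cayleyAdj {R' : Type*} [CommRing R'] (f : R →+* R') (A : Matrix n n R) :
    f.mapMatrix (cayleyAdj A) = cayleyAdj (f.mapMatrix A) := by
  rw [cayleyAdj, cayleyAdj, map_mul, RingHom.map_adjugate, map_sub, map_add, map_one]

lemma det_one_sub_eq_det_one_add {A : Matrix n n R} (hA : Aᵀ = -A) :
    (1 - A).det = (1 + A).det := by
  rw [← Matrix.det_transpose, Matrix.transpose_sub, Matrix.transpose_one, hA, sub_neg_eq_add]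

lemma cayleyAdj_mul_transpose {A : Matrix n n R} (hA : Aᵀ = -A) :
    cayleyAdj A * (cayleyAdj A)ᵀ = (1 + A).det ^ 2 • 1 := by
  have htr : (cayleyAdj A)ᵀ = (1 - A).adjugate * (1 + A) := by
    rw [cayleyAdj, Matrix.transpose_mul, Matrix.adjugate_transpose, Matrix.transpose_add,
      Matrix.transpose_sub, Matrix.transpose_one, hA, ← sub_eq_add_neg, sub_neg_eq_add]
  have hcomm : (1 + A).adjugate * (1 - A).adjugate = (1 - A).adjugate * (1 + A).adjugate := by
    rw [← Matrix.adjugate_mul_distrib, ← Matrix.adjugate_mul_distrib]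
    congr 1
    noncomm_ring
  calc cayleyAdj A * (cayleyAdj A)ᵀ
      = (1 - A) * ((1 + A).adjugate * (1 - A).adjugate) * (1 + A) := by
        rw [htr, cayleyAdj]
        simp only [Matrix.mul_assoc]
    _ = ((1 - A) * (1 - A).adjugate) * ((1 + A).adjugate * (1 + A)) := by
        simp only [hcomm, Matrix.mul_assoc]
    _ = (1 + A).det ^ 2 • 1 := by
        rw [Matrix.mul_adjugate, Matrix.adjugate_mul, det_one_sub_eq_det_one_add hA,
          smul_mul_smul, Matrix.one_mul, sq]

lemma cayleyAdj_eq_smul_of_cube_eq_neg {A : Matrix n n R} (hA : A * A * A = -A) :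
    cayleyAdj A = (1 + A).det • (1 + A * A - A) := by
  have h : 1 - A = (1 + A * A - A) * (1 + A) := by
    rw [show (1 + A * A - A) * (1 + A) = 1 + A * A * A by noncomm_ring, hA, sub_eq_add_neg]
  rw [cayleyAdj, h, Matrix.mul_assoc, Matrix.mul_adjugate, Matrix.mul_smul, Matrix.mul_one]

lemma one_add_mul_self_sub_mul_transpose_of_cube_eq_neg {A : Matrix n n R} (hAt : Aᵀ = -A)
    (hA : A * A * A = -A) :
    (1 + A * A - A) * (1 + A * A - A)ᵀ = 1 := by
  have h4 : A * A * A * A = -(A * A) := by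
    rw [hA, Matrix.neg_mul]
  rw [Matrix.transpose_sub, Matrix.transpose_add, Matrix.transpose_mul, hAt,
    Matrix.transpose_one, show (1 + A * A - A) * (1 + -A * -A - -A) = 1 + A * A + A * A * A * A by
      noncomm_ring, h4, add_neg_cancel_right]

end Cayley

lemma det_one_add_ne_zero_of_transpose_eq_neg {n R : Type*} [Fintype n] [DecidableEq n] [Field R]
    [LinearOrder R] [IsStrictOrderedRing R] {A : Matrix n n R} (hA : Aᵀ = -A) :
    (1 + A).det ≠ 0 := by
  intro h
  obtain ⟨v, hv, hAv⟩ := Matrix.exists_mulVec_eq_zero_iff.mpr h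
  have hskew : v ⬝ᵥ (A *ᵥ v) = 0 := by
    have : v ⬝ᵥ (A *ᵥ v) = -(v ⬝ᵥ (A *ᵥ v)) := by
      conv_lhs => rw [Matrix.dotProduct_mulVec, ← Matrix.mulVec_transpose, hA, Matrix.neg_mulVec,
        neg_dotProduct, dotProduct_comm]
    linarith
  have : v ⬝ᵥ v = 0 := by
    simpa [Matrix.add_mulVec, dotProduct_add, hskew] using congrArg (v ⬝ᵥ ·) hAv
  exact hv (dotProduct_self_eq_zero.mp this)

section PartialIsometry

variable {n R : Type*} [Fintype n] [CommRing R] {M : Matrix n n R}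

lemma sub_transpose_mul_self_of_mul_self_eq_zero (hMM : M * M = 0) :
    (M - Mᵀ) * (M - Mᵀ) = -(M * Mᵀ + Mᵀ * M) := by
  have hMM' : Mᵀ * Mᵀ = 0 := by rw [← Matrix.transpose_mul, hMM, Matrix.transpose_zero]
  simp only [sub_mul, mul_sub, hMM, hMM']
  abel

lemma sub_transpose_cube_eq_neg (hMM : M * M = 0) (hMMM : M * Mᵀ * M = M) :
    (M - Mᵀ) * (M - Mᵀ) * (M - Mᵀ) = -(M - Mᵀ) := by
  have hMMM' : Mᵀ * M * Mᵀ = Mᵀ := by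
    simpa [Matrix.transpose_mul, Matrix.mul_assoc] using congrArg Matrix.transpose hMMM
  have e1 : M * Mᵀ * Mᵀ = 0 := by
    rw [Matrix.mul_assoc, ← Matrix.transpose_mul, hMM, Matrix.transpose_zero, Matrix.mul_zero]
  have e2 : Mᵀ * M * M = 0 := by rw [Matrix.mul_assoc, hMM, Matrix.mul_zero]
  rw [sub_transpose_mul_self_of_mul_self_eq_zero hMM]
  simp only [neg_mul, add_mul, mul_sub, hMMM, hMMM', e1, e2]
  abel

end PartialIsometry

section Pairing

variable {n : Type*} [DecidableEq n] (R : Type*) [CommRing R] {k : ℕ}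

def stdRows (u : Fin k → n) : Matrix (Fin k) n R := (1 : Matrix n n R).submatrix u id

/-- The matrix `∑ m, e_{u m} e_{w m}ᵀ`, sending `e_{w m}` to `e_{u m}`. -/
def pairing (u w : Fin k → n) : Matrix n n R := (stdRows R u)ᵀ * stdRows R w

variable {R}

lemma stdRows_apply (u : Fin k → n) (m : Fin k) (i : n) :
    stdRows R u m i = (1 : Matrix n n R) (u m) i := rfl

lemma stdRows_mul_transpose [Fintype n] (u v : Fin k → n) :
    stdRows R u * (stdRows R v)ᵀ = (1 : Matrix n n R).submatrix u v := by
  rw [stdRows, stdRows, Matrix.transpose_submatrix, Matrix.transpose_one,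
    ← Matrix.submatrix_mul _ _ _ _ _ Function.bijective_id, Matrix.one_mul]

lemma transpose_pairing (u w : Fin k → n) : (pairing R u w)ᵀ = pairing R w u := by
  rw [pairing, pairing, Matrix.transpose_mul, Matrix.transpose_transpose]

lemma pairing_mul_pairing [Fintype n] (u w : Fin k → n) {v : Fin k → n}
    (hv : Function.Injective v) :
    pairing R u v * pairing R v w = pairing R u w := by
  rw [pairing, pairing, pairing, Matrix.mul_assoc, ← Matrix.mul_assoc (stdRows R v),
    stdRows_mul_transpose, Matrix.submatrix_one _ hv, Matrix.one_mul]

lemma pairing_mul_pairing_of_disjoint [Fintype n] (u w : Fin k → n) {v v' : Fin k → n}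
    (h : ∀ m m', v m ≠ v' m') : pairing R u v * pairing R v' w = 0 := by
  have h0 : (1 : Matrix n n R).submatrix v v' = 0 := by
    ext m m'
    exact Matrix.one_apply_ne (h m m')
  rw [pairing, pairing, Matrix.mul_assoc, ← Matrix.mul_assoc (stdRows R v),
    stdRows_mul_transpose, h0, Matrix.zero_mul, Matrix.mul_zero]

lemma pairing_apply_of_notMem {u : Fin k → n} {s : n} (hs : s ∉ Set.range u) (w : Fin k → n)
    (t : n) : pairing R u w s t = 0 := by
  refine (Matrix.mul_apply).trans (sum_eq_zero fun m _ => ?_)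
  rw [Matrix.transpose_apply, stdRows_apply, Matrix.one_apply_ne fun h => hs ⟨m, h⟩, zero_mul]

lemma pairing_apply {u : Fin k → n} (hu : Function.Injective u) (w : Fin k → n) (m : Fin k)
    (t : n) : pairing R u w (u m) t = (1 : Matrix n n R) (w m) t := by
  rw [pairing, Matrix.mul_apply, Fintype.sum_eq_single m fun j hj => by
    rw [Matrix.transpose_apply, stdRows_apply, Matrix.one_apply_ne (hu.ne hj), zero_mul]]
  rw [Matrix.transpose_apply, stdRows_apply, stdRows_apply, Matrix.one_apply_eq, one_mul]

end Pairing

/-- `A` turns each plane spanned by `e_{u m}` and `e_{w m}` by a right angle, where `u` and `w`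
enumerate `S \ T` and `T \ S`; so its Cayley transform `1 + A² - A` swaps these basis vectors up
to sign and fixes the others. -/
lemma exists_skew_cube_eq_neg_rows_supported {S T : Finset N} (h : S.card = T.card) :
    ∃ A : Matrix N N ℝ, Aᵀ = -A ∧ A * A * A = -A ∧
      ∀ s ∈ S, ∀ t ∉ T, (1 + A * A - A) s t = 0 := by
  set u := (S \ T).orderEmbOfFin rfl
  set w := (T \ S).orderEmbOfFin (card_sdiff_comm h).symm
  have hu : ∀ m, u m ∈ S \ T := fun m => orderEmbOfFin_mem _ _ m
  have hw : ∀ m, w m ∈ T \ S := fun m => orderEmbOfFin_mem _ _ m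
  have hwu : ∀ m m', w m ≠ u m' := fun m m' h =>
    (mem_sdiff.mp (hw m)).2 (h ▸ (mem_sdiff.mp (hu m')).1)
  have hMM : pairing ℝ u w * pairing ℝ u w = 0 := pairing_mul_pairing_of_disjoint _ _ hwu
  have hMMM : pairing ℝ u w * (pairing ℝ u w)ᵀ * pairing ℝ u w = pairing ℝ u w := by
    rw [transpose_pairing, pairing_mul_pairing _ _ w.injective,
      pairing_mul_pairing _ _ u.injective]
  refine ⟨pairing ℝ u w - (pairing ℝ u w)ᵀ,
    by rw [Matrix.transpose_sub, Matrix.transpose_transpose, neg_sub],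
    sub_transpose_cube_eq_neg hMM hMMM, fun s hs t ht => ?_⟩
  have hsw : s ∉ Set.range w := fun ⟨m, hm⟩ => (mem_sdiff.mp (hw m)).2 (hm ▸ hs)
  rw [sub_transpose_mul_self_of_mul_self_eq_zero hMM, transpose_pairing,
    pairing_mul_pairing _ _ w.injective, pairing_mul_pairing _ _ u.injective]
  simp only [Matrix.sub_apply, Matrix.add_apply, Matrix.neg_apply, pairing_apply_of_notMem hsw]
  by_cases hsu : s ∈ Set.range u
  · obtain ⟨m, rfl⟩ := hsu
    have hwt : w m ≠ t := fun h => ht (h ▸ (mem_sdiff.mp (hw m)).1)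
    simp [pairing_apply u.injective, Matrix.one_apply_ne hwt]
  · have hsT : s ∈ T := by
      by_contra hsT
      exact hsu (by rw [range_orderEmbOfFin]; simp [hs, hsT])
    simp [pairing_apply_of_notMem hsu, Matrix.one_apply_ne fun h : s = t => ht (h ▸ hsT)]

lemma MvPolynomial.exists_forall_eval_ne_zero {σ ι R : Type*} [CommRing R] [IsDomain R]
    [Infinite R] [Fintype ι] (p : ι → MvPolynomial σ R) (hp : ∀ i, p i ≠ 0) :
    ∃ x : σ → R, ∀ i, eval x (p i) ≠ 0 := by
  have hprod : ∏ i, p i ≠ 0 := prod_ne_zero_iff.mpr fun i _ => hp i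
  obtain ⟨x, hx⟩ : ∃ x, eval x (∏ i, p i) ≠ 0 := by
    by_contra! h
    exact hprod (MvPolynomial.funext fun x => by rw [h x, map_zero])
  rw [map_prod, prod_ne_zero_iff] at hx
  exact ⟨x, fun i => hx i (mem_univ i)⟩

section GenericSkew

open MvPolynomial

variable (n R : Type*) [Fintype n] [DecidableEq n] [CommRing R]

noncomputable def genericSkew : Matrix n n (MvPolynomial (n × n) R) :=
  Matrix.mvPolynomialX n n R - (Matrix.mvPolynomialX n n R)ᵀ

variable {n R}

lemma transpose_mapMatrix_eval_genericSkew (x : n × n → R) :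
    ((eval x).mapMatrix (genericSkew n R))ᵀ = -(eval x).mapMatrix (genericSkew n R) := by
  have hG : (genericSkew n R)ᵀ = -genericSkew n R := by
    rw [genericSkew, Matrix.transpose_sub, Matrix.transpose_transpose, neg_sub]
  rw [RingHom.mapMatrix_apply, ← Matrix.transpose_map, hG, ← RingHom.mapMatrix_apply, map_neg]
  rfl

lemma exists_mapMatrix_eval_genericSkew_eq {A : Matrix n n ℝ} (hA : Aᵀ = -A) :
    ∃ x : n × n → ℝ, (eval x).mapMatrix (genericSkew n ℝ) = A := by
  refine ⟨fun p => ((2 : ℝ)⁻¹ • A) p.1 p.2, ?_⟩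
  rw [genericSkew, map_sub, Matrix.mvPolynomialX_mapMatrix_eval, RingHom.mapMatrix_apply,
    Matrix.transpose_map, ← RingHom.mapMatrix_apply, Matrix.mvPolynomialX_mapMatrix_eval,
    Matrix.transpose_smul, hA, smul_neg, sub_neg_eq_add, ← add_smul]
  norm_num

end GenericSkew

lemma orderedMinor_cayleyAdj_genericSkew_ne_zero {S T : Finset N} (h : S.card = T.card) :
    orderedMinor (cayleyAdj (genericSkew N ℝ)) S T h ≠ 0 := by
  obtain ⟨A, hAt, hA, hsupp⟩ := exists_skew_cube_eq_neg_rows_supported h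
  obtain ⟨x, hx⟩ := exists_mapMatrix_eval_genericSkew_eq hAt
  intro h0
  have := congrArg (MvPolynomial.eval x) h0
  rw [RingHom.map_orderedMinor, RingHom.mapMatrix_cayleyAdj, hx,
    cayleyAdj_eq_smul_of_cube_eq_neg hA, orderedMinor_smul, map_zero] at this
  exact mul_ne_zero (pow_ne_zero _ (det_one_add_ne_zero_of_transpose_eq_neg hAt))
    (orderedMinor_ne_zero_of_mul_transpose_eq_one
      (one_add_mul_self_sub_mul_transpose_of_cube_eq_neg hAt hA) h hsupp) this

lemma exists_orthogonal_forall_orderedMinor_ne_zero :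
    ∃ R : Matrix N N ℝ, R * Rᵀ = 1 ∧ ∀ S T (h : S.card = T.card), orderedMinor R S T h ≠ 0 := by
  obtain ⟨x, hx⟩ := MvPolynomial.exists_forall_eval_ne_zero
    (fun p : {p : Finset N × Finset N // p.1.card = p.2.card} =>
      orderedMinor (cayleyAdj (genericSkew N ℝ)) p.1.1 p.1.2 p.2)
    fun p => orderedMinor_cayleyAdj_genericSkew_ne_zero p.2
  set A := (MvPolynomial.eval x).mapMatrix (genericSkew N ℝ)
  have hA : Aᵀ = -A := transpose_mapMatrix_eval_genericSkew x
  have hdet := det_one_add_ne_zero_of_transpose_eq_neg hA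
  refine ⟨(1 + A).det⁻¹ • cayleyAdj A, ?_, fun S T h => ?_⟩
  · rw [Matrix.transpose_smul, Matrix.smul_mul, Matrix.mul_smul, cayleyAdj_mul_transpose hA,
      smul_smul, smul_smul]
    convert one_smul ℝ (1 : Matrix N N ℝ)
    field_simp
  · have := hx ⟨(S, T), h⟩
    rw [RingHom.map_orderedMinor, RingHom.mapMatrix_cayleyAdj] at this
    rw [orderedMinor_smul]
    exact mul_ne_zero (pow_ne_zero _ (inv_ne_zero hdet)) this

theorem exists_generic_basis_general (e : N → N → ℝ) (he : Orthonormalish e) :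
    ∃ f : N → N → ℝ, Orthonormalish f ∧
      ∀ S T : Finset N, S.card = T.card → ip (wedgeFam f S) (wedgeFam e T) ≠ 0 := by
  obtain ⟨R, hR, hminor⟩ := exists_orthogonal_forall_orderedMinor_ne_zero (N := N)
  rw [orthonormalish_iff_mul_transpose] at he
  have hf : Matrix.of (Matrix.of.symm (R * Matrix.of e)) = R * Matrix.of e :=
    Matrix.of.apply_symm_apply _
  have hfe : Matrix.of (Matrix.of.symm (R * Matrix.of e)) * (Matrix.of e)ᵀ = R := by
    rw [hf, Matrix.mul_assoc, he, Matrix.mul_one]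
  refine ⟨Matrix.of.symm (R * Matrix.of e), ?_, fun S T h => ?_⟩
  · rw [orthonormalish_iff_mul_transpose, hf, Matrix.transpose_mul, ← Matrix.mul_assoc,
      Matrix.mul_assoc R, he, Matrix.mul_one, hR]
  · rw [ip_wedgeFam _ _ h, hfe]
    exact hminor S T h

/-- For every orthonormal basis {e_v} of V there is an orthonormal basis {f_v} such
that the pair is generic: ⟨f_S, e_T⟩ ≠ 0 for all S, T ⊆ N of equal size. -/
theorem exists_generic_basis (e : N → N → ℝ) (he : Orthonormalish e)
    (hspan : Submodule.span ℝ (Set.range e) = (⊤ : Submodule ℝ (N → ℝ))) :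
    ∃ f : N → N → ℝ, Orthonormalish f ∧
      ∀ S T : Finset N, S.card = T.card → ip (wedgeFam f S) (wedgeFam e T) ≠ 0 :=
  exists_generic_basis_general e he
end

section
/- Linear-algebraic lower bound for weak saturation (Kalai's method): Let G be a hypergraph, V a vector space, and H a hypergraph (pattern). Let f: E(G) → V be a map such that for every copy H̃ of H in G and every edge e ∈ E(H̃), the rank of f(E(H̃)∖{e}) equals the rank of f(E(H̃)). Then wsat(G, H) ≥ rank(f(E(G))), i.e., every weakly H-saturated spanning subgraph F of G satisfies |E(F)| ≥ rank(f(E(G))). -/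
set_option maxHeartbeats 1000000

open Finset

/-- A hypergraph is given by its (finite) set of edges, each a finite set of vertices.
`F` (a spanning subhypergraph of `G`, i.e. `F ⊆ G`) is weakly `H`-saturated in `G` if
the missing edges of `F` can be ordered so that each added edge lies in a copy of `H`
present after its addition.  A copy of `H` is given by an injection `φ` of the vertices
of `H`; its edges are the `φ`-images of the edges of `H`. -/
def WeaklySat {α β : Type*} [DecidableEq α] (G : Finset (Finset α))
    (H : Finset (Finset β)) (F : Finset (Finset α)) : Prop :=
  F ⊆ G ∧ ∃ l : List (Finset α), l.Nodup ∧ l.toFinset = G \ F ∧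
    ∀ j : Fin l.length, ∃ φ : β → α, Function.Injective φ ∧
      (∀ e ∈ H, e.image φ ∈ F ∪ (l.take (j.1 + 1)).toFinset) ∧
      l.get j ∈ H.image (fun e => e.image φ)

/-- Kalai's linear-algebraic lower bound for weak saturation: if `f : E(G) → V` is such
that for every copy `H̃` of `H` in `G` and every edge `e` of `H̃`, the span of
`f(E(H̃) ∖ {e})` equals the span of `f(E(H̃))`, then every weakly `H`-saturated spanning
subhypergraph `F` of `G` has at least `rank f(E(G))` edges. -/
theorem wsat_lower_bound_kalai {α β : Type*} [DecidableEq α] {W : Type*}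
    [AddCommGroup W] [Module ℝ W]
    (G : Finset (Finset α)) (H : Finset (Finset β)) (f : Finset α → W)
    (hf : ∀ φ : β → α, Function.Injective φ → (∀ e ∈ H, e.image φ ∈ G) →
      ∀ e ∈ H.image (fun e => e.image φ),
        Submodule.span ℝ (f '' ((H.image (fun e => e.image φ) \ {e} : Finset (Finset α)) : Set (Finset α)))
          = Submodule.span ℝ (f '' ((H.image (fun e => e.image φ) : Finset (Finset α)) : Set (Finset α))))
    (F : Finset (Finset α)) (hF : WeaklySat G H F) :
    Module.finrank ℝ (Submodule.span ℝ (f '' (G : Set (Finset α)))) ≤ F.card := by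
  classical
  obtain ⟨hFG, l, hnd, hto, hcopy⟩ := hF
  have hlG : ∀ x ∈ l, x ∈ G := by
    intro x hx
    have : x ∈ G \ F := hto ▸ List.mem_toFinset.2 hx
    exact (Finset.mem_sdiff.1 this).1
  have key : ∀ k, k ≤ l.length →
      Submodule.span ℝ (f '' ((F ∪ (l.take k).toFinset : Finset (Finset α)) : Set (Finset α)))
        = Submodule.span ℝ (f '' (F : Set (Finset α))) := by
    intro k
    induction k with
    | zero => intro _; simp
    | succ k ih =>
      intro hk
      have hk' : k < l.length := hk
      have ihk := ih (le_of_lt hk')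
      set e : Finset α := l.get ⟨k, hk'⟩ with he
      have htake : (l.take (k+1)).toFinset = insert e (l.take k).toFinset := by
        ext x
        simp only [List.mem_toFinset, Finset.mem_insert, he, List.get_eq_getElem]
        rw [List.take_succ, List.getElem?_eq_getElem hk']
        simp only [Option.toList_some, List.mem_append, List.mem_singleton]
        tauto
      have hunion : F ∪ (l.take (k+1)).toFinset = insert e (F ∪ (l.take k).toFinset) := by
        rw [htake, Finset.union_insert]
      obtain ⟨φ, hinj, hedges, hmem⟩ := hcopy ⟨k, hk'⟩
      have hG : ∀ e' ∈ H, e'.image φ ∈ G := by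
        intro e' he'
        have := hedges e' he'
        rcases Finset.mem_union.1 this with h | h
        · exact hFG h
        · exact hlG _ (List.take_subset _ _ (List.mem_toFinset.1 h))
      have hspan := hf φ hinj hG e hmem
      have hfe : f e ∈ Submodule.span ℝ
          (f '' ((H.image (fun e => e.image φ) \ {e} : Finset (Finset α)) : Set (Finset α))) := by
        rw [hspan]
        exact Submodule.subset_span (Set.mem_image_of_mem f (by exact_mod_cast hmem))
      have hsub : ((H.image (fun e => e.image φ) \ {e} : Finset (Finset α)) : Set (Finset α))
          ⊆ ((F ∪ (l.take k).toFinset : Finset (Finset α)) : Set (Finset α)) := by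
        intro x hx
        have hx' : x ∈ H.image (fun e => e.image φ) ∧ x ≠ e := by
          simpa [Finset.mem_sdiff] using hx
        obtain ⟨hxH, hxe⟩ := hx'
        obtain ⟨e', he', rfl⟩ := Finset.mem_image.1 hxH
        have := hedges e' he'
        rw [hunion] at this
        rcases Finset.mem_insert.1 this with h | h
        · exact absurd h hxe
        · exact_mod_cast h
      have hfe' : f e ∈ Submodule.span ℝ
          (f '' ((F ∪ (l.take k).toFinset : Finset (Finset α)) : Set (Finset α))) :=
        Submodule.span_mono (Set.image_mono (f := f) hsub) hfe
      rw [hunion]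
      rw [show ((insert e (F ∪ (l.take k).toFinset) : Finset (Finset α)) : Set (Finset α))
        = insert e ((F ∪ (l.take k).toFinset : Finset (Finset α)) : Set (Finset α)) from
        Finset.coe_insert _ _]
      rw [Set.image_insert_eq, Submodule.span_insert_eq_span hfe', ihk]
  have hfin : F ∪ (l.take l.length).toFinset = G := by
    rw [List.take_length, hto, Finset.union_sdiff_of_subset hFG]
  have h := key l.length le_rfl
  rw [hfin] at h
  rw [h, ← Finset.coe_image]
  calc Module.finrank ℝ (Submodule.span ℝ ((F.image f : Finset W) : Set W))
      ≤ (F.image f).card := finrank_span_finset_le_card _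
    _ ≤ F.card := Finset.card_image_le
end

section
/- Weak saturation of complete d-partite d-uniform hypergraphs (Moshkovitz–Shapira, special case s = 1): for integers n_i ≥ r_i ≥ 1 (i ∈ [d]), wsat(K^d_{n_1,…,n_d}, K^d_{r_1,…,r_d}) = ∏_{i∈[d]} n_i − |{T ∈ ∏_i [n_i] : ∃σ ∈ S_d ∀i, T_i ∈ [n_i]∖[r_{σ(i)} − 1]}|. -/
/-
Identify an edge of `K_{n_1,…,n_d}` with its cell `U ∈ ∏ [n_i]` (0-indexed). Call `U` dominating
if `U_i + 1 ≥ r_{σ i}` for all `i`, for some permutation `σ`; the non-dominating cells form a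
weakly saturated hypergraph of minimum size.

Upper bound: add the dominating cells in order of increasing coordinate sum. A dominating cell
`U₀` is the top corner of a box `∏_j [U₀(τ j) - r_j + 1, U₀(τ j)]` spanning a copy of `K_r`, and
every other cell of the box has a smaller coordinate sum.

Lower bound: give the edge with cell `T` the vector `(T^U)_U`, indexed by the non-dominating
exponents `U`. A copy of `K_r` is, up to permuting parts, a box `∏_j A_j` with `|A_j| = r_j`.
Tensoring the Lagrange relations `∑_{t ∈ A_j} c_t t^u = 0` (for `u ≤ r_j - 2`, all `c_t ≠ 0`)
gives a relation among the vectors of the box with all coefficients nonzero, because a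
non-dominating `U` has some exponent `U_{τ j} ≤ r_j - 2`. So the span never grows during
saturation. By the invertibility of the multivariate Vandermonde matrix, the vectors of all
cells span a space whose dimension is the number of non-dominating cells.
-/

open Finset

theorem mem_span_image_erase_of_sum_smul_eq_zero {K V ι : Type*} [Field K] [AddCommGroup V]
    [Module K V] [DecidableEq ι] {s : Finset ι} {f : ι → V} {γ : ι → K}
    (hsum : ∑ i ∈ s, γ i • f i = 0) {i₀ : ι} (hi₀ : i₀ ∈ s) (hγ : γ i₀ ≠ 0) :
    f i₀ ∈ Submodule.span K (f '' ↑(s.erase i₀)) := by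
  rw [← add_sum_erase s _ hi₀, ← eq_neg_iff_add_eq_zero] at hsum
  rw [← inv_smul_smul₀ hγ (f i₀), hsum]
  refine Submodule.smul_mem _ _ (Submodule.neg_mem _ (Submodule.sum_mem _ fun i hi => ?_))
  exact Submodule.smul_mem _ _ (Submodule.subset_span (Set.mem_image_of_mem f hi))

theorem Lagrange.sum_nodalWeight_mul_pow_eq_zero {F ι : Type*} [Field F] [DecidableEq ι]
    {s : Finset ι} {x : ι → F} (hx : Set.InjOn x s) {u : ℕ} (hu : u + 2 ≤ s.card) :
    ∑ i ∈ s, Lagrange.nodalWeight s x i * x i ^ u = 0 := by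
  have hdeg : (Polynomial.X ^ u : Polynomial F).degree < s.card := by
    rw [Polynomial.degree_X_pow]
    exact_mod_cast (by omega : u < s.card)
  have hcoeff := Lagrange.coeff_eq_sum hx hdeg
  rw [Polynomial.coeff_X_pow, if_neg (by omega)] at hcoeff
  simpa [Lagrange.nodalWeight, prod_inv_distrib, div_eq_inv_mul] using hcoeff.symm

namespace Matrix

variable {ι : Type*} [Fintype ι] {m n p : ι → Type*} {R : Type*}

def piKronecker [CommSemiring R] (A : ∀ i, Matrix (m i) (n i) R) :
    Matrix (∀ i, m i) (∀ i, n i) R :=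
  of fun U T => ∏ i, A i (U i) (T i)

theorem piKronecker_mul [CommSemiring R] [DecidableEq ι] [∀ i, Fintype (n i)]
    (A : ∀ i, Matrix (m i) (n i) R) (B : ∀ i, Matrix (n i) (p i) R) :
    piKronecker A * piKronecker B = piKronecker fun i => A i * B i := by
  ext U V
  simp only [piKronecker, mul_apply, of_apply, ← prod_mul_distrib]
  rw [prod_univ_sum, Fintype.piFinset_univ]

theorem piKronecker_one [CommSemiring R] [DecidableEq ι] [∀ i, DecidableEq (m i)] :
    piKronecker (fun i => (1 : Matrix (m i) (m i) R)) = 1 := by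
  ext U V
  simp [piKronecker, one_apply, prod_boole, funext_iff]

theorem isUnit_piKronecker [CommRing R] [DecidableEq ι] [∀ i, Fintype (m i)]
    [∀ i, DecidableEq (m i)] {A : ∀ i, Matrix (m i) (m i) R} (hA : ∀ i, IsUnit (A i)) :
    IsUnit (piKronecker A) := by
  choose B hB using fun i => (hA i).exists_right_inv
  rw [isUnit_iff_isUnit_det]
  exact isUnit_det_of_right_inverse (by rw [piKronecker_mul, funext hB, piKronecker_one])

end Matrix

lemma List.mem_take_add_one {α : Type*} {l : List α} {k : ℕ} {a : α} :
    a ∈ l.take (k + 1) ↔ a ∈ l.take k ∨ ∃ h : k < l.length, l[k] = a := by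
  rw [List.take_add_one, List.mem_append, Option.mem_toList, List.getElem?_eq_some_iff]

namespace WeaklySat

variable {α β : Type*} [DecidableEq α] {G : Finset (Finset α)} {H : Finset (Finset β)}
  {F : Finset (Finset α)} {K V : Type*} [Field K] [AddCommGroup V] [Module K V]

theorem span_le (hF : WeaklySat G H F) (v : Finset α → V)
    (hcopy : ∀ φ : β → α, Function.Injective φ → (∀ e ∈ H, e.image φ ∈ G) → ∀ e ∈ H,
      v (e.image φ) ∈ Submodule.span K (v '' ↑((H.image (·.image φ)).erase (e.image φ)))) :
    Submodule.span K (v '' ↑G) ≤ Submodule.span K (v '' ↑F) := by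
  obtain ⟨hFG, l, -, hl, hstep⟩ := hF
  have hlG : ∀ k, F ∪ (l.take k).toFinset ⊆ G := fun k e he => by
    rcases mem_union.1 he with he | he
    · exact hFG he
    · have : e ∈ l.toFinset := List.mem_toFinset.2 (List.mem_of_mem_take (List.mem_toFinset.1 he))
      exact (mem_sdiff.1 (hl ▸ this)).1
  have hsplit : ∀ k, ∀ e ∈ F ∪ (l.take (k + 1)).toFinset,
      e ∈ F ∪ (l.take k).toFinset ∨ ∃ hk : k < l.length, l[k] = e := fun k e he => by
    simp only [mem_union, List.mem_toFinset, List.mem_take_add_one] at he ⊢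
    tauto
  have key : ∀ k, ∀ e ∈ F ∪ (l.take k).toFinset, v e ∈ Submodule.span K (v '' ↑F) := by
    intro k
    induction k with
    | zero => simpa using fun e he => Submodule.subset_span (Set.mem_image_of_mem v (mem_coe.2 he))
    | succ k ih =>
      intro e he
      rcases hsplit k e he with he | ⟨hk, rfl⟩
      · exact ih e he
      obtain ⟨φ, hφ, himg, hnew⟩ := hstep ⟨k, hk⟩
      obtain ⟨e₀, he₀, he₀k⟩ := mem_image.1 hnew
      have hspan := hcopy φ hφ (fun e he => hlG _ (himg e he)) e₀ he₀
      simp only [he₀k, List.get_eq_getElem] at hspan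
      refine Submodule.span_le.2 ?_ hspan
      rintro _ ⟨e', he', rfl⟩
      obtain ⟨hne, he'⟩ := mem_erase.1 he'
      obtain ⟨e'', he'', rfl⟩ := mem_image.1 he'
      exact ih _ ((hsplit k _ (himg e'' he'')).resolve_right fun ⟨_, h⟩ => hne h.symm)
  rw [← union_sdiff_of_subset hFG, ← hl, ← List.take_length (l := l)]
  exact Submodule.span_le.2 fun _ ⟨e, he, hve⟩ => hve ▸ key _ e he

theorem finrank_span_le_card (hF : WeaklySat G H F) (v : Finset α → V)
    (hcopy : ∀ φ : β → α, Function.Injective φ → (∀ e ∈ H, e.image φ ∈ G) → ∀ e ∈ H,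
      v (e.image φ) ∈ Submodule.span K (v '' ↑((H.image (·.image φ)).erase (e.image φ)))) :
    Module.finrank K (Submodule.span K (v '' ↑G)) ≤ F.card := by
  classical
  have hrank := finrank_span_finset_le_card (R := K) (F.image v)
  rw [Set.finrank, coe_image] at hrank
  have := FiniteDimensional.span_of_finite K (F.finite_toSet.image v)
  exact (Submodule.finrank_mono (hF.span_le v hcopy)).trans (hrank.trans card_image_le)

/-- The missing edges are added in order of increasing weight. -/
theorem of_exists_copy (hFG : F ⊆ G) (weight : Finset α → ℕ)
    (hcopy : ∀ e ∈ G \ F, ∃ φ : β → α, Function.Injective φ ∧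
      (∀ e' ∈ H, e'.image φ = e ∨ e'.image φ ∈ G ∧ weight (e'.image φ) < weight e) ∧
      e ∈ H.image (·.image φ)) :
    WeaklySat G H F := by
  set l := (G \ F).toList.mergeSort fun a b => decide (weight a ≤ weight b)
  have hperm : l.Perm (G \ F).toList := List.mergeSort_perm _ _
  have hsorted : l.Pairwise fun a b => weight a ≤ weight b := by
    simpa using List.pairwise_mergeSort (le := fun a b => decide (weight a ≤ weight b))
      (fun a b c hab hbc => by simp only [decide_eq_true_eq] at *; omega)
      (fun a b => by simpa using le_total _ _) (G \ F).toList
  have hl : l.toFinset = G \ F := by rw [List.toFinset_eq_of_perm _ _ hperm, toList_toFinset]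
  refine ⟨hFG, l, hperm.nodup_iff.2 (nodup_toList _), hl, fun j => ?_⟩
  have hj : l.get j ∈ l.take (j.1 + 1) := List.mem_take_add_one.2 (Or.inr ⟨j.2, rfl⟩)
  obtain ⟨φ, hφ, himg, hnew⟩ := hcopy (l.get j) (hl ▸ List.mem_toFinset.2 (List.get_mem l j))
  refine ⟨φ, hφ, fun e he => ?_, hnew⟩
  rcases himg e he with heq | ⟨heG, hlt⟩
  · exact mem_union_right _ (List.mem_toFinset.2 (heq ▸ hj))
  by_cases heF : e.image φ ∈ F
  · exact mem_union_left _ heF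
  refine mem_union_right _ (List.mem_toFinset.2 ?_)
  have hel : e.image φ ∈ l := List.mem_toFinset.1 (hl ▸ mem_sdiff.2 ⟨heG, heF⟩)
  rw [← List.take_append_drop (j.1 + 1) l, List.mem_append] at hel
  refine hel.resolve_right fun hdrop => hlt.not_ge ?_
  rw [← List.take_append_drop (j.1 + 1) l, List.pairwise_append] at hsorted
  exact hsorted.2.2 _ hj _ hdrop

end WeaklySat

section Transversal

variable {ι : Type*} [Fintype ι] [DecidableEq ι] {κ : ι → Type*}

def transversal [∀ i, DecidableEq (κ i)] (T : ∀ i, κ i) : Finset (Σ i, κ i) :=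
  univ.image fun i => ⟨i, T i⟩

def completeMultipartite (κ : ι → Type*) [∀ i, Fintype (κ i)] [∀ i, DecidableEq (κ i)] :
    Finset (Finset (Σ i, κ i)) :=
  univ.filter fun W => ∀ i, (W.filter fun v => v.1 = i).card = 1

variable [∀ i, DecidableEq (κ i)]

theorem mem_transversal {T : ∀ i, κ i} {x : Σ i, κ i} : x ∈ transversal T ↔ ⟨x.1, T x.1⟩ = x := by
  simp only [transversal, mem_image, mem_univ, true_and]
  exact ⟨fun ⟨i, h⟩ => h ▸ rfl, fun h => ⟨x.1, h⟩⟩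

@[to_additive]
theorem prod_transversal {M : Type*} [CommMonoid M] (f : (Σ i, κ i) → M) (T : ∀ i, κ i) :
    ∏ x ∈ transversal T, f x = ∏ i, f ⟨i, T i⟩ :=
  prod_image fun _ _ _ _ h => congrArg Sigma.fst h

theorem transversal_injective : Function.Injective (transversal (κ := κ)) := fun T T' h => by
  funext i
  have : (⟨i, T i⟩ : Σ i, κ i) ∈ transversal T' := h ▸ mem_transversal.2 rfl
  simpa using (mem_transversal.1 this).symm

variable [∀ i, Fintype (κ i)]

theorem image_univ_mem_completeMultipartite {ι' : Type*} [Fintype ι'] {f : ι' → Σ i, κ i}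
    (hf : Function.Bijective fun j => (f j).1) : univ.image f ∈ completeMultipartite κ := by
  refine mem_filter.2 ⟨mem_univ _, fun i => ?_⟩
  obtain ⟨j, rfl⟩ := hf.2 i
  rw [filter_image, card_image_of_injective _ fun a b h => hf.1 (congrArg Sigma.fst h)]
  have hj : ∀ a, (f a).1 = (f j).1 ↔ a = j := fun a => hf.1.eq_iff
  exact card_eq_one.2 ⟨j, by ext a; simpa using hj a⟩

theorem transversal_mem_completeMultipartite (T : ∀ i, κ i) :
    transversal T ∈ completeMultipartite κ :=
  image_univ_mem_completeMultipartite Function.bijective_id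

theorem eq_of_mem_completeMultipartite {W : Finset (Σ i, κ i)} (hW : W ∈ completeMultipartite κ)
    {x y : Σ i, κ i} (hx : x ∈ W) (hy : y ∈ W) (hxy : x.1 = y.1) : x = y :=
  card_le_one.1 ((mem_filter.1 hW).2 x.1).le x (mem_filter.2 ⟨hx, rfl⟩) y
    (mem_filter.2 ⟨hy, hxy.symm⟩)

theorem completeMultipartite_eq_image : completeMultipartite κ = univ.image transversal := by
  refine Subset.antisymm (fun W hW => ?_)
    (image_subset_iff.2 fun T _ => transversal_mem_completeMultipartite T)
  have hpart : ∀ i, ∃ t : κ i, ⟨i, t⟩ ∈ W := fun i => by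
    obtain ⟨⟨j, t⟩, hx⟩ := card_pos.1 (((mem_filter.1 hW).2 i).symm ▸ one_pos)
    obtain ⟨hxW, rfl⟩ := mem_filter.1 hx
    exact ⟨t, hxW⟩
  choose T hT using hpart
  refine mem_image.2 ⟨T, mem_univ _, ?_⟩
  ext x
  refine ⟨fun hx => ?_, fun hx => ?_⟩
  · exact mem_transversal.1 hx ▸ hT x.1
  · exact mem_transversal.2 (eq_of_mem_completeMultipartite hW (hT x.1) hx rfl)

theorem exists_perm_fst_eq_of_image_mem {κ' : ι → Type*} [∀ j, DecidableEq (κ' j)]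
    {φ : (Σ j, κ' j) → Σ i, κ i} (hφ : Function.Injective φ)
    (hcopy : ∀ w : ∀ j, κ' j, (transversal w).image φ ∈ completeMultipartite κ)
    (w₀ : ∀ j, κ' j) : ∃ τ : Equiv.Perm ι, ∀ x, (φ x).1 = τ x.1 := by
  set q : (∀ j, κ' j) → ι → ι := fun w j => (φ ⟨j, w j⟩).1
  have hinj : ∀ w, Function.Injective (q w) := fun w j j' h => by
    have hmem : ∀ j, φ ⟨j, w j⟩ ∈ (transversal w).image φ := fun j =>
      mem_image_of_mem φ (mem_transversal.2 rfl)
    exact congrArg Sigma.fst (hφ (eq_of_mem_completeMultipartite (hcopy w) (hmem j) (hmem j') h))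
  have hbij : ∀ w, Function.Bijective (q w) := fun w => Finite.injective_iff_bijective.1 (hinj w)
  have hupdate : ∀ w j v, q (Function.update w j v) j = q w j := fun w j v => by
    obtain ⟨k, hk⟩ := (hbij (Function.update w j v)).2 (q w j)
    by_cases hkj : k = j
    · exact hkj ▸ hk
    · refine absurd (hinj w ?_) hkj
      simpa [q, Function.update_of_ne hkj] using hk
  refine ⟨Equiv.ofBijective _ (hbij w₀), fun ⟨j, v⟩ => ?_⟩
  simpa [q] using hupdate w₀ j v

end Transversal

section Monomial

variable {ι : Type*} [Fintype ι] [DecidableEq ι] {n : ι → ℕ}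

/-- The monomial `X ^ U` evaluated at the point whose coordinates are the vertices of `e`. -/
def monomialAt (U : ∀ i, Fin (n i)) (e : Finset (Σ i, Fin (n i))) : ℚ :=
  ∏ x ∈ e, ((x.2 : ℕ) : ℚ) ^ (U x.1 : ℕ)

theorem monomialAt_transversal (U T : ∀ i, Fin (n i)) :
    monomialAt U (transversal T) = ∏ i, ((T i : ℕ) : ℚ) ^ (U i : ℕ) :=
  prod_transversal _ T

theorem isUnit_monomialAt_transversal :
    IsUnit (Matrix.of fun U T : ∀ i, Fin (n i) => monomialAt U (transversal T)) := by
  have hkron : Matrix.of (fun U T : ∀ i, Fin (n i) => monomialAt U (transversal T)) =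
      Matrix.piKronecker fun i =>
        (Matrix.vandermonde fun t : Fin (n i) => ((t : ℕ) : ℚ)).transpose := by
    ext U T
    simp [monomialAt_transversal, Matrix.piKronecker]
  rw [hkron]
  refine Matrix.isUnit_piKronecker fun i => ?_
  rw [Matrix.isUnit_iff_isUnit_det, Matrix.det_transpose, isUnit_iff_ne_zero,
    Matrix.det_vandermonde_ne_zero_iff]
  exact Nat.cast_injective.comp Fin.val_injective

theorem finrank_span_monomialAt (s : Finset (∀ i, Fin (n i))) :
    Module.finrank ℚ (Submodule.span ℚ
      (Set.range fun T => fun U : s => monomialAt U.1 (transversal T))) = s.card := by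
  set A : Matrix s (∀ i, Fin (n i)) ℚ := Matrix.of fun U T => monomialAt U.1 (transversal T)
  have hrows : LinearIndependent ℚ A.row :=
    (Matrix.linearIndependent_rows_of_isUnit isUnit_monomialAt_transversal).comp _
      Subtype.val_injective
  calc _ = A.rank := A.rank_eq_finrank_span_cols.symm
    _ = _ := A.rank_eq_finrank_span_row
    _ = s.card := by rw [finrank_span_eq_card hrows, Fintype.card_coe]

end Monomial

section Copies

variable {ι : Type*} {r n : ι → ℕ}

def imageCoord (φ : (Σ j, Fin (r j)) → Σ i, Fin (n i)) (j : ι) (v : Fin (r j)) : ℚ :=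
  ((φ ⟨j, v⟩).2 : ℕ)

theorem imageCoord_injective {φ : (Σ j, Fin (r j)) → Σ i, Fin (n i)} (hφ : Function.Injective φ)
    {j i : ι} (hpart : ∀ v, (φ ⟨j, v⟩).1 = i) : Function.Injective (imageCoord φ j) :=
  fun v v' h => by
    have hval : ((φ ⟨j, v⟩).2 : ℕ) = (φ ⟨j, v'⟩).2 := Nat.cast_injective h
    have hfst := (hpart v).trans (hpart v').symm
    exact eq_of_heq (Sigma.mk.inj_iff.1
      (hφ (Sigma.ext hfst ((Fin.heq_ext_iff (congrArg n hfst)).2 hval)))).2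

variable [Fintype ι] [DecidableEq ι]

/-- The tensor product of the one-dimensional Lagrange relations of the parts of the box. -/
theorem sum_prod_nodalWeight_mul_monomialAt_eq_zero {φ : (Σ j, Fin (r j)) → Σ i, Fin (n i)}
    (hφ : Function.Injective φ) {τ : Equiv.Perm ι} (hτ : ∀ x, (φ x).1 = τ x.1)
    {U : ∀ i, Fin (n i)} {j₀ : ι} (hU : (U (τ j₀) : ℕ) + 2 ≤ r j₀) :
    ∑ w : ∀ j, Fin (r j), (∏ j, Lagrange.nodalWeight univ (imageCoord φ j) (w j)) *
      monomialAt U ((transversal w).image φ) = 0 := by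
  have hmon : ∀ w : ∀ j, Fin (r j), monomialAt U ((transversal w).image φ) =
      ∏ j, imageCoord φ j (w j) ^ (U (τ j) : ℕ) := fun w => by
    rw [monomialAt, prod_image fun x _ y _ h => hφ h, prod_transversal]
    exact prod_congr rfl fun j _ => by rw [imageCoord, congrArg (fun i => (U i : ℕ)) (hτ ⟨j, w j⟩)]
  simp only [hmon, ← prod_mul_distrib]
  rw [← Fintype.prod_sum fun j v =>
    Lagrange.nodalWeight univ (imageCoord φ j) v * imageCoord φ j v ^ (U (τ j) : ℕ)]
  refine prod_eq_zero (mem_univ j₀) ?_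
  exact Lagrange.sum_nodalWeight_mul_pow_eq_zero
    (imageCoord_injective hφ (i := τ j₀) fun v => hτ ⟨j₀, v⟩).injOn (by simpa using hU)

end Copies

section BoxEmbedding

variable {ι : Type*} {r n : ι → ℕ}

def vertexSum (e : Finset (Σ i, Fin (n i))) : ℕ :=
  ∑ x ∈ e, (x.2 : ℕ)

/-- The copy of `K_r` on the box `∏ j, [U₀ (τ j) + 1 - r j, U₀ (τ j)]` with top corner `U₀`. -/
def boxEmbedding (U₀ : ∀ i, Fin (n i)) (τ : Equiv.Perm ι) (hτ : ∀ j, r j ≤ U₀ (τ j) + 1)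
    (x : Σ j, Fin (r j)) : Σ i, Fin (n i) :=
  ⟨τ x.1, ⟨x.2 + (U₀ (τ x.1) + 1 - r x.1), by have := hτ x.1; have := (U₀ (τ x.1)).2; omega⟩⟩

theorem boxEmbedding_injective {U₀ : ∀ i, Fin (n i)} {τ : Equiv.Perm ι}
    (hτ : ∀ j, r j ≤ U₀ (τ j) + 1) : Function.Injective (boxEmbedding U₀ τ hτ) := by
  rintro ⟨j, v⟩ ⟨j', v'⟩ h
  obtain ⟨hj, hv⟩ := Sigma.mk.inj_iff.1 h
  obtain rfl := τ.injective hj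
  have := congrArg Fin.val (eq_of_heq hv)
  dsimp only at this
  exact congrArg _ (Fin.ext (by omega))

end BoxEmbedding

section Saturation

variable {ι : Type*} [Fintype ι] [DecidableEq ι] (r : ι → ℕ) {n : ι → ℕ}

/-- With `T = U + 1` the paper's coordinates, this says `T i ≥ r (σ i)` for all `i`. -/
def Dominates (U : ∀ i, Fin (n i)) : Prop :=
  ∃ σ : Equiv.Perm ι, ∀ i, r (σ i) ≤ U i + 1

instance : DecidablePred (Dominates r (n := n)) := fun U => by
  unfold Dominates; infer_instance

def nonDominating (n : ι → ℕ) : Finset (∀ i, Fin (n i)) :=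
  univ.filter fun U => ¬ Dominates r U

variable {r}

theorem monomialAt_mem_span_of_copy {s : Finset (∀ i, Fin (n i))}
    (hs : ∀ U ∈ s, ¬ Dominates r U) {φ : (Σ j, Fin (r j)) → Σ i, Fin (n i)}
    (hφ : Function.Injective φ)
    (hcopy : ∀ e ∈ completeMultipartite (fun j => Fin (r j)),
      e.image φ ∈ completeMultipartite fun i => Fin (n i))
    {e : Finset (Σ j, Fin (r j))} (he : e ∈ completeMultipartite fun j => Fin (r j)) :
    (fun U : s => monomialAt U.1 (e.image φ)) ∈ Submodule.span ℚ
      ((fun e (U : s) => monomialAt U.1 e) ''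
        ↑(((completeMultipartite fun j => Fin (r j)).image (·.image φ)).erase (e.image φ))) := by
  rw [completeMultipartite_eq_image] at he
  obtain ⟨w₀, -, rfl⟩ := mem_image.1 he
  obtain ⟨τ, hτ⟩ := exists_perm_fst_eq_of_image_mem hφ
    (fun w => hcopy _ (transversal_mem_completeMultipartite w)) w₀
  have hrel : ∑ w : ∀ j, Fin (r j), (∏ j, Lagrange.nodalWeight univ (imageCoord φ j) (w j)) •
      (fun U : s => monomialAt U.1 ((transversal w).image φ)) = 0 := by
    funext U
    obtain ⟨i, hi⟩ : ∃ i, (U.1 i : ℕ) + 1 < r (τ.symm i) := by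
      simpa [Dominates] using fun h => hs U.1 U.2 ⟨τ.symm, h⟩
    simp only [Finset.sum_apply, Pi.smul_apply, smul_eq_mul, Pi.zero_apply]
    exact sum_prod_nodalWeight_mul_monomialAt_eq_zero hφ hτ (U := U.1) (j₀ := τ.symm i)
      (by rw [τ.apply_symm_apply]; omega)
  have hweight : ∏ j, Lagrange.nodalWeight univ (imageCoord φ j) (w₀ j) ≠ 0 :=
    prod_ne_zero_iff.2 fun j _ => Lagrange.nodalWeight_ne_zero
      (imageCoord_injective hφ (i := τ j) fun v => hτ ⟨j, v⟩).injOn (mem_univ _)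
  refine Submodule.span_mono ?_
    (mem_span_image_erase_of_sum_smul_eq_zero hrel (mem_univ w₀) hweight)
  rintro _ ⟨w, hw, rfl⟩
  refine ⟨(transversal w).image φ, mem_erase.2 ⟨fun h => (mem_erase.1 hw).1 ?_, ?_⟩, rfl⟩
  · exact transversal_injective (image_injective hφ h)
  · exact mem_image_of_mem _ (transversal_mem_completeMultipartite w)

theorem card_nonDominating_le_of_weaklySat {F : Finset (Finset (Σ i, Fin (n i)))}
    (hF : WeaklySat (completeMultipartite fun i => Fin (n i))
      (completeMultipartite fun j => Fin (r j)) F) :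
    (nonDominating r n).card ≤ F.card := by
  have hdim := hF.finrank_span_le_card (K := ℚ) (fun e (U : nonDominating r n) => monomialAt U.1 e)
    fun φ hφ hcopy e he => monomialAt_mem_span_of_copy (fun U hU => (mem_filter.1 hU).2) hφ hcopy he
  rwa [completeMultipartite_eq_image, coe_image, coe_univ, Set.image_univ, ← Set.range_comp,
    Function.comp_def, finrank_span_monomialAt] at hdim

section Box

variable {U₀ : ∀ i, Fin (n i)} {τ : Equiv.Perm ι} (hτ : ∀ j, r j ≤ U₀ (τ j) + 1)

theorem image_transversal_boxEmbedding (w : ∀ j, Fin (r j)) :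
    (transversal w).image (boxEmbedding U₀ τ hτ) =
      univ.image fun j => boxEmbedding U₀ τ hτ ⟨j, w j⟩ := by
  rw [transversal, image_image]; rfl

theorem image_transversal_boxEmbedding_mem (w : ∀ j, Fin (r j)) :
    (transversal w).image (boxEmbedding U₀ τ hτ) ∈ completeMultipartite fun i => Fin (n i) := by
  rw [image_transversal_boxEmbedding]
  exact image_univ_mem_completeMultipartite τ.bijective

theorem image_transversal_boxEmbedding_eq {w : ∀ j, Fin (r j)} (hw : ∀ j, (w j : ℕ) + 1 = r j) :
    (transversal w).image (boxEmbedding U₀ τ hτ) = transversal U₀ := by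
  rw [image_transversal_boxEmbedding, transversal]
  conv_rhs => rw [← image_univ_equiv τ, image_image]
  apply image_congr
  intro j _
  have := hw j; have := hτ j
  dsimp only [boxEmbedding, Function.comp_apply]
  exact congrArg (Sigma.mk (τ j)) (Fin.ext (by dsimp only; omega))

theorem vertexSum_image_transversal_boxEmbedding_lt {w : ∀ j, Fin (r j)}
    (hw : ∃ j, (w j : ℕ) + 1 ≠ r j) :
    vertexSum ((transversal w).image (boxEmbedding U₀ τ hτ)) < vertexSum (transversal U₀) := by
  rw [vertexSum, vertexSum, sum_image (fun _ _ _ _ h => boxEmbedding_injective hτ h),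
    sum_transversal, sum_transversal, ← Equiv.sum_comp τ fun i => (U₀ i : ℕ)]
  obtain ⟨j₀, hj₀⟩ := hw
  refine sum_lt_sum (fun j _ => ?_) ⟨j₀, mem_univ _, ?_⟩
  · have := (w j).2; have := hτ j
    dsimp only [boxEmbedding]
    omega
  · have := (w j₀).2; have := hτ j₀
    dsimp only [boxEmbedding]
    omega

end Box

theorem weaklySat_nonDominating (hr : ∀ j, 1 ≤ r j) :
    WeaklySat (completeMultipartite fun i => Fin (n i)) (completeMultipartite fun j => Fin (r j))
      ((nonDominating r n).image transversal) := by
  refine WeaklySat.of_exists_copy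
    (image_subset_iff.2 fun U _ => transversal_mem_completeMultipartite U) vertexSum fun e he => ?_
  obtain ⟨heG, heF⟩ := mem_sdiff.1 he
  rw [completeMultipartite_eq_image] at heG
  obtain ⟨U₀, -, rfl⟩ := mem_image.1 heG
  obtain ⟨σ, hσ⟩ : Dominates r U₀ := by
    by_contra h
    exact heF (mem_image_of_mem _ (mem_filter.2 ⟨mem_univ _, h⟩))
  have hτ : ∀ j, r j ≤ U₀ (σ.symm j) + 1 := fun j => by simpa using hσ (σ.symm j)
  refine ⟨boxEmbedding U₀ σ.symm hτ, boxEmbedding_injective hτ, fun e' he' => ?_, ?_⟩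
  · rw [completeMultipartite_eq_image] at he'
    obtain ⟨w, -, rfl⟩ := mem_image.1 he'
    by_cases hw : ∀ j, (w j : ℕ) + 1 = r j
    · exact Or.inl (image_transversal_boxEmbedding_eq hτ hw)
    · exact Or.inr ⟨image_transversal_boxEmbedding_mem hτ w,
        vertexSum_image_transversal_boxEmbedding_lt hτ (not_forall.1 hw)⟩
  · let wtop : ∀ j, Fin (r j) := fun j => ⟨r j - 1, by have := hr j; omega⟩
    refine mem_image.2 ⟨transversal wtop, transversal_mem_completeMultipartite _,
      image_transversal_boxEmbedding_eq hτ fun j => ?_⟩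
    have := hr j
    simp only [wtop]
    omega

variable (r n) in
theorem ncard_dominating :
    {T : ι → ℕ | (∀ i, T i ∈ Icc 1 (n i)) ∧
      ∃ σ : Equiv.Perm ι, ∀ i, T i ∈ Icc 1 (n i) \ Icc 1 (r (σ i) - 1)}.ncard =
      (univ.filter (Dominates r (n := n))).card := by
  have hset : {T : ι → ℕ | (∀ i, T i ∈ Icc 1 (n i)) ∧
      ∃ σ : Equiv.Perm ι, ∀ i, T i ∈ Icc 1 (n i) \ Icc 1 (r (σ i) - 1)} =
      (fun (U : ∀ i, Fin (n i)) i => (U i : ℕ) + 1) ''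
        (univ.filter (Dominates r (n := n)) : Set (∀ i, Fin (n i))) := by
    ext T
    simp only [Set.mem_ofPred_eq, Set.mem_image, coe_filter, mem_univ, true_and, mem_sdiff,
      mem_Icc, Dominates, not_and, not_le]
    constructor
    · rintro ⟨hT, σ, hσ⟩
      refine ⟨fun i => ⟨T i - 1, by have := hT i; omega⟩, ⟨σ, fun i => ?_⟩, funext fun i => ?_⟩
      · have := hσ i; dsimp only; omega
      · have := hT i; dsimp only; omega
    · rintro ⟨U, ⟨σ, hσ⟩, rfl⟩
      dsimp only
      exact ⟨fun i => ⟨by omega, (U i).2⟩, σ, fun i => ⟨⟨by omega, (U i).2⟩, fun _ => by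
        have := hσ i; omega⟩⟩
  rw [hset, Set.ncard_image_of_injective _ fun U U' h => funext fun i =>
    Fin.ext (by simpa using congrFun h i), Set.ncard_coe_finset]

variable (r n) in
theorem card_dominating_add_card_nonDominating :
    (univ.filter (Dominates r (n := n))).card + (nonDominating r n).card = ∏ i, n i := by
  rw [nonDominating, card_filter_add_card_filter_not, card_univ, Fintype.card_pi]
  simp

end Saturation

theorem wsat_complete_multipartite_general (d : ℕ) (n r : Fin d → ℕ)
    (hr : ∀ i, 1 ≤ r i) :
    sInf {k : ℕ | ∃ F : Finset (Finset ((i : Fin d) × Fin (n i))),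
        WeaklySat
          (Finset.univ.filter fun W : Finset ((i : Fin d) × Fin (n i)) =>
            ∀ i : Fin d, (W.filter fun v => v.1 = i).card = 1)
          (Finset.univ.filter fun W : Finset ((i : Fin d) × Fin (r i)) =>
            ∀ i : Fin d, (W.filter fun v => v.1 = i).card = 1)
          F ∧ F.card = k}
      = (∏ i : Fin d, n i) -
        Set.ncard {T : Fin d → ℕ | (∀ i, T i ∈ Icc 1 (n i)) ∧
          ∃ σ : Equiv.Perm (Fin d), ∀ i, T i ∈ Icc 1 (n i) \ Icc 1 (r (σ i) - 1)} := by
  -- not `rfl`: the statement decides `∀ i : Fin d` by `Nat.decidableForallFin`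
  have hG : ∀ m : Fin d → ℕ, (univ.filter fun W : Finset ((i : Fin d) × Fin (m i)) =>
      ∀ i : Fin d, (W.filter fun v => v.1 = i).card = 1) =
        completeMultipartite fun i => Fin (m i) :=
    fun m => by unfold completeMultipartite; congr 1
  have hleast : IsLeast {k | ∃ F, WeaklySat (completeMultipartite fun i => Fin (n i))
      (completeMultipartite fun j => Fin (r j)) F ∧ F.card = k} (nonDominating r n).card :=
    ⟨⟨_, weaklySat_nonDominating hr, card_image_of_injective _ transversal_injective⟩,
      fun k ⟨F, hF, hk⟩ => hk ▸ card_nonDominating_le_of_weaklySat hF⟩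
  rw [hG n, hG r, hleast.csInf_eq, ncard_dominating,
    ← card_dominating_add_card_nonDominating r n]
  omega

/-- Moshkovitz–Shapira: weak saturation of complete d-partite d-uniform hypergraphs.
The host `K^d_{n₁,…,n_d}` has vertex parts `Fin (n i)` and edges the transversals
(one vertex from each part); similarly the pattern `K^d_{r₁,…,r_d}`. -/
theorem wsat_complete_multipartite (d : ℕ) (hd : 1 ≤ d) (n r : Fin d → ℕ)
    (hr : ∀ i, 1 ≤ r i) (hrn : ∀ i, r i ≤ n i) :
    sInf {k : ℕ | ∃ F : Finset (Finset ((i : Fin d) × Fin (n i))),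
        WeaklySat
          (Finset.univ.filter fun W : Finset ((i : Fin d) × Fin (n i)) =>
            ∀ i : Fin d, (W.filter fun v => v.1 = i).card = 1)
          (Finset.univ.filter fun W : Finset ((i : Fin d) × Fin (r i)) =>
            ∀ i : Fin d, (W.filter fun v => v.1 = i).card = 1)
          F ∧ F.card = k}
      = (∏ i : Fin d, n i) -
        Set.ncard {T : Fin d → ℕ | (∀ i, T i ∈ Icc 1 (n i)) ∧
          ∃ σ : Equiv.Perm (Fin d), ∀ i, T i ∈ Icc 1 (n i) \ Icc 1 (r (σ i) - 1)} :=
  wsat_complete_multipartite_general d n r hr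
end
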